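/- arXiv:1301.2445 — 7 statements merged into one kernel-verified Lean document; each statement's English description precedes it below -/
import Mathlib

section
/- Let v ≥ 3 be an integer and let C = (Z_v, B) be a balanced combinatorial configuration of type (v_k) on the point set Z_v (i.e., B is a collection of v k-element subsets of Z_v, any two distinct lines meet in at most one point, and every point lies on exactly k lines, with k ≥ 3) such that the translation x ↦ x + 1 is an automorphism of C. Then there exists a subset S ⊆ Z_v such that B consists exactly of the sets S + i for i ∈ Z_v. -/
open Finset

private lemma image_image_add {v : ℕ} (L : Finset (ZMod v)) (a b : ZMod v) :
    (L.image (· + a)).image (· + b) = L.image (· + (a + b)) := by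
  rw [Finset.image_image]
  congr 1
  funext x
  simp [Function.comp, add_assoc]

/-- The stabilizer of a finset of `ZMod v` under translation, as an additive subgroup. -/
private def lineStab {v : ℕ} (T : Finset (ZMod v)) : AddSubgroup (ZMod v) where
  carrier := {d | T.image (· + d) = T}
  zero_mem' := by
    show T.image (· + (0 : ZMod v)) = T
    simp only [add_zero]
    exact Finset.image_id
  add_mem' := by
    intro a b ha hb
    show T.image (· + (a + b)) = T
    rw [← image_image_add, ha, hb]
  neg_mem' := by
    intro a ha
    show T.image (· + (-a)) = T
    have h : T.image (· + a) = T := ha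
    have h2 := image_image_add T a (-a)
    rw [h] at h2
    simpa using h2

private lemma mem_lineStab {v : ℕ} {T : Finset (ZMod v)} {d : ZMod v} :
    d ∈ lineStab T ↔ T.image (· + d) = T := Iff.rfl

private lemma aux_subgroup_unique {v : ℕ} [NeZero v] (H K : AddSubgroup (ZMod v))
    (h : Nat.card H = Nat.card K) : H = K := by
  classical
  have key : ∀ J : AddSubgroup (ZMod v),
      (J : Set (ZMod v)) = {a : ZMod v | Nat.card J • a = 0} := by
    intro J
    have hpos : 0 < Nat.card J := Nat.card_pos
    have hsub : (J : Set (ZMod v)) ⊆ {a : ZMod v | Nat.card J • a = 0} := by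
      intro x hx
      have hx0 : Nat.card J • (⟨x, hx⟩ : J) = 0 := card_nsmul_eq_zero'
      have hx1 := congrArg (Subtype.val) hx0
      show Nat.card J • x = 0
      exact hx1
    have hle := IsAddCyclic.card_nsmul_eq_zero_le (α := ZMod v) hpos
    have hfin : ({a : ZMod v | Nat.card J • a = 0} : Set (ZMod v)).Finite :=
      Set.toFinite _
    apply Set.eq_of_subset_of_ncard_le hsub ?_ hfin
    have h1 : ({a : ZMod v | Nat.card J • a = 0} : Set (ZMod v)).ncard
        = ({a : ZMod v | Nat.card J • a = 0} : Finset (ZMod v)).card := by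
      rw [Set.ncard_eq_toFinset_card']
      congr 1
      simp [Set.toFinset_setOf]
    have h2 : (J : Set (ZMod v)).ncard = Nat.card J :=
      (Nat.card_coe_set_eq _).symm
    rw [h1, h2]
    exact hle
  have hJ := key H
  have hK := key K
  rw [h] at hJ
  exact SetLike.coe_injective (hJ.trans hK.symm)

/-- A balanced configuration of type (v_k) on `ZMod v` admitting the
translation `x ↦ x + 1` as an automorphism has a base line `S`, i.e. its lines are
exactly the translates `S + i`, `i ∈ ZMod v`. -/
theorem cyclic_configuration_has_base_line
    (v k : ℕ) (hv : 3 ≤ v) (hk : 3 ≤ k)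
    (B : Finset (Finset (ZMod v)))
    (hcardB : B.card = v)
    (hlines : ∀ L ∈ B, L.card = k)
    (hmeet : ∀ L ∈ B, ∀ L' ∈ B, L ≠ L' → (L ∩ L').card ≤ 1)
    (hpoint : ∀ p : ZMod v, (B.filter (fun L => p ∈ L)).card = k)
    (htrans : B.image (fun L => L.image (· + (1 : ZMod v))) = B) :
    ∃ S : Finset (ZMod v),
      ∀ L : Finset (ZMod v), L ∈ B ↔ ∃ i : ZMod v, L = S.image (· + i) := by
  classical
  haveI : NeZero v := ⟨by omega⟩
  -- translation by any i preserves B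
  have hmem1 : ∀ L ∈ B, L.image (· + (1 : ZMod v)) ∈ B := by
    intro L hL
    rw [← htrans]
    exact Finset.mem_image_of_mem _ hL
  have hmemN : ∀ n : ℕ, ∀ L ∈ B, L.image (· + (n : ZMod v)) ∈ B := by
    intro n
    induction n with
    | zero => intro L hL; simpa using hL
    | succ n ih =>
      intro L hL
      have h := hmem1 _ (ih L hL)
      rw [image_image_add] at h
      have : ((n : ZMod v) + 1) = ((n + 1 : ℕ) : ZMod v) := by push_cast; ring
      rwa [this] at h
  have hmemi : ∀ i : ZMod v, ∀ L ∈ B, L.image (· + i) ∈ B := by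
    intro i L hL
    have h := hmemN i.val L hL
    rwa [ZMod.natCast_rightInverse i] at h
  by_cases hfree : ∃ S ∈ B, ∀ d : ZMod v, S.image (· + d) = S → d = 0
  · obtain ⟨S, hSB, hstab⟩ := hfree
    refine ⟨S, fun L => ⟨?_, ?_⟩⟩
    · intro hL
      set f : ZMod v → Finset (ZMod v) := fun i => S.image (· + i) with hf
      have hinj : Function.Injective f := by
        intro i j hij
        have h2 : (f i).image (· + (-j)) = (f j).image (· + (-j)) := by rw [hij]
        simp only [hf, image_image_add] at h2
        rw [add_neg_cancel] at h2
        simp only [add_zero] at h2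
        have h3 : S.image (· + (i + -j)) = S := by simpa using h2
        have h4 : i - j = 0 := by
          have := hstab _ h3
          rwa [sub_eq_add_neg]
        exact sub_eq_zero.mp h4
      have hsubset : Finset.univ.image f ⊆ B := by
        intro L' hL'
        obtain ⟨i, _, rfl⟩ := Finset.mem_image.mp hL'
        exact hmemi i S hSB
      have hcard : (Finset.univ.image f).card = v := by
        rw [Finset.card_image_of_injective _ hinj, Finset.card_univ, ZMod.card]
      have heq : Finset.univ.image f = B :=
        Finset.eq_of_subset_of_card_le hsubset (by rw [hcard, hcardB])
      rw [← heq] at hL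
      obtain ⟨i, _, hi⟩ := Finset.mem_image.mp hL
      exact ⟨i, hi.symm⟩
    · rintro ⟨i, rfl⟩
      exact hmemi i S hSB
  · exfalso
    push_neg at hfree
    have h0 : (B.filter (fun L => (0 : ZMod v) ∈ L)).card = k := hpoint 0
    have h1 : 1 < (B.filter (fun L => (0 : ZMod v) ∈ L)).card := by omega
    obtain ⟨T, hT, T', hT', hTT'⟩ := Finset.one_lt_card.mp h1
    have hTB : T ∈ B := (Finset.mem_filter.mp hT).1
    have h0T : (0 : ZMod v) ∈ T := (Finset.mem_filter.mp hT).2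
    have hT'B : T' ∈ B := (Finset.mem_filter.mp hT').1
    have h0T' : (0 : ZMod v) ∈ T' := (Finset.mem_filter.mp hT').2
    -- key: a stabilized line through 0 equals its stabilizer
    have key : ∀ T : Finset (ZMod v), T ∈ B → (0 : ZMod v) ∈ T →
        (T : Set (ZMod v)) = (lineStab T : Set (ZMod v)) := by
      intro T hTB h0T
      obtain ⟨d, hd, hd0⟩ := hfree T hTB
      have hdT : d ∈ T := by
        have : (0 : ZMod v) + d ∈ T.image (· + d) := Finset.mem_image_of_mem _ h0T
        rwa [hd, zero_add] at this
      apply Set.Subset.antisymm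
      · intro q hq
        simp only [Finset.mem_coe] at hq
        show T.image (· + q) = T
        by_contra hne
        have hT2B : T.image (· + q) ∈ B := hmemi q T hTB
        have hq1 : q ∈ T ∩ T.image (· + q) := by
          refine Finset.mem_inter.mpr ⟨hq, ?_⟩
          have : (0 : ZMod v) + q ∈ T.image (· + q) := Finset.mem_image_of_mem _ h0T
          rwa [zero_add] at this
        have hq2 : q + d ∈ T ∩ T.image (· + q) := by
          refine Finset.mem_inter.mpr ⟨?_, ?_⟩
          · have : q + d ∈ T.image (· + d) := Finset.mem_image_of_mem _ hq
            rwa [hd] at this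
          · have : d + q ∈ T.image (· + q) := Finset.mem_image_of_mem _ hdT
            rwa [add_comm d q] at this
        have hqq : q ≠ q + d := fun h => hd0 (left_eq_add.mp h)
        have hsub2 : ({q, q + d} : Finset (ZMod v)) ⊆ T ∩ T.image (· + q) := by
          intro x hx
          rcases Finset.mem_insert.mp hx with rfl | hx
          · exact hq1
          · rw [Finset.mem_singleton.mp hx]; exact hq2
        have hc2 : 2 ≤ (T ∩ T.image (· + q)).card := by
          calc 2 = ({q, q + d} : Finset (ZMod v)).card := (Finset.card_pair hqq).symm
            _ ≤ _ := Finset.card_le_card hsub2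
        have := hmeet T hTB _ hT2B (fun h => hne h.symm)
        omega
      · intro x hx
        have hx' : T.image (· + x) = T := hx
        have : (0 : ZMod v) + x ∈ T.image (· + x) := Finset.mem_image_of_mem _ h0T
        rw [hx', zero_add] at this
        exact this
    have e1 := key T hTB h0T
    have e2 := key T' hT'B h0T'
    have c1 : Nat.card (lineStab T) = k := by
      have : Nat.card (lineStab T) = (lineStab T : Set (ZMod v)).ncard :=
        Nat.card_coe_set_eq _
      rw [this, ← e1, Set.ncard_coe_finset, hlines T hTB]
    have c2 : Nat.card (lineStab T') = k := by
      have : Nat.card (lineStab T') = (lineStab T' : Set (ZMod v)).ncard :=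
        Nat.card_coe_set_eq _
      rw [this, ← e2, Set.ncard_coe_finset, hlines T' hT'B]
    have hstabeq : lineStab T = lineStab T' :=
      aux_subgroup_unique _ _ (c1.trans c2.symm)
    have : (T : Set (ZMod v)) = (T' : Set (ZMod v)) := by
      rw [e1, hstabeq, ← e2]
    exact hTT' (Finset.coe_injective this)
end

section
/- Let v and k be integers with k ≥ 3 and v ≥ k² − k + 1, and let N denote the number of orbits of the affine group AGL₁(v) = { x ↦ ax + b : a ∈ Z_v*, b ∈ Z_v } acting on B_con(v,k). Then k · φ(v) · N = Σ_{l ∈ Z_v*} N(v,k,l), where N(v,k,l) is the number of sets X ∈ B_con(v,k) with 0 ∈ X for which lX = X − x for some x ∈ X, and φ is Euler's totient function. -/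
open scoped Pointwise

/-- `B_con(v,k)`: base lines of connected cyclic configurations of type (v_k). -/
def Bcon (v k : ℕ) : Set (Finset (ZMod v)) :=
  {X | X.card = k ∧ (X - X).card = k ^ 2 - k + 1 ∧
    AddSubgroup.closure ((X - X : Finset (ZMod v)) : Set (ZMod v)) = ⊤}

/-- The orbit relation of the affine group `AGL₁(v)` acting on `B_con(v,k)` by
`X ↦ aX + b`. -/
def affRel (v k : ℕ) (X Y : Bcon v k) : Prop :=
  ∃ a : (ZMod v)ˣ, ∃ b : ZMod v,
    (Y : Finset (ZMod v)) = (X : Finset (ZMod v)).image (fun t => (a : ZMod v) * t + b)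

namespace OrbitAux

variable {v k : ℕ} [NeZero v]

lemma mul_inj (a : (ZMod v)ˣ) : Function.Injective (fun t : ZMod v => (a : ZMod v) * t) :=
  fun x y h => (Units.mul_right_inj a).mp h

lemma add_inj (b : ZMod v) : Function.Injective (fun t : ZMod v => t + b) :=
  fun x y h => by simpa using h

lemma aff_inj (a : (ZMod v)ˣ) (b : ZMod v) :
    Function.Injective (fun t : ZMod v => (a : ZMod v) * t + b) := by
  intro x y h
  exact (Units.mul_right_inj a).mp (by simpa using h)

lemma image_mul_left_inj (a : (ZMod v)ˣ) {α : Type*} {s t : Finset α}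
    {f g : α → ZMod v} :
    s.image (fun x => (a : ZMod v) * f x) = t.image (fun x => (a : ZMod v) * g x) ↔
      s.image f = t.image g := by
  constructor
  · intro h
    apply Finset.image_injective (mul_inj a)
    rwa [Finset.image_image, Finset.image_image]
  · intro h
    have := congrArg (Finset.image (fun t : ZMod v => (a : ZMod v) * t)) h
    rwa [Finset.image_image, Finset.image_image] at this

lemma image_add_right_inj (b : ZMod v) {α : Type*} {s t : Finset α}
    {f g : α → ZMod v} :
    s.image (fun x => f x + b) = t.image (fun x => g x + b) ↔
      s.image f = t.image g := by
  constructor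
  · intro h
    apply Finset.image_injective (add_inj b)
    rwa [Finset.image_image, Finset.image_image]
  · intro h
    have := congrArg (Finset.image (fun t : ZMod v => t + b)) h
    rwa [Finset.image_image, Finset.image_image] at this

lemma sub_image (a : (ZMod v)ˣ) (b : ZMod v) (X : Finset (ZMod v)) :
    (X.image (fun t => (a : ZMod v) * t + b)) - (X.image (fun t => (a : ZMod v) * t + b)) =
      (X - X).image (fun t => (a : ZMod v) * t) := by
  ext d
  simp only [Finset.mem_sub, Finset.mem_image]
  constructor
  · rintro ⟨_, ⟨x, hx, rfl⟩, _, ⟨y, hy, rfl⟩, rfl⟩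
    exact ⟨x - y, ⟨x, hx, y, hy, rfl⟩, by ring⟩
  · rintro ⟨_, ⟨x, hx, y, hy, rfl⟩, rfl⟩
    exact ⟨_, ⟨x, hx, rfl⟩, _, ⟨y, hy, rfl⟩, by ring⟩

lemma Bcon_affine {X : Finset (ZMod v)} (hX : X ∈ Bcon v k) (a : (ZMod v)ˣ) (b : ZMod v) :
    X.image (fun t => (a : ZMod v) * t + b) ∈ Bcon v k := by
  obtain ⟨h1, h2, h3⟩ := hX
  refine ⟨?_, ?_, ?_⟩
  · rw [Finset.card_image_of_injective _ (aff_inj a b)]; exact h1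
  · rw [sub_image, Finset.card_image_of_injective _ (mul_inj a)]; exact h2
  · rw [sub_image]
    have himg : ((X - X).image (fun t => (a : ZMod v) * t) : Set (ZMod v)) =
        (fun t : ZMod v => (a : ZMod v) * t) '' ((X - X : Finset (ZMod v)) : Set (ZMod v)) := by
      simp [Finset.coe_image]
    rw [himg]
    have hfe : ⇑(AddMonoidHom.mulLeft (a : ZMod v)) = fun t : ZMod v => (a : ZMod v) * t := rfl
    have := AddMonoidHom.map_closure (AddMonoidHom.mulLeft (a : ZMod v))
      ((X - X : Finset (ZMod v)) : Set (ZMod v))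
    rw [h3, hfe] at this
    rw [← this]
    exact AddSubgroup.map_top_of_surjective _ (fun y => ⟨(a⁻¹ : (ZMod v)ˣ) * y, by
      simp [AddMonoidHom.mulLeft, Units.mul_inv_cancel_left]⟩)

lemma affRel_equivalence : Equivalence (affRel v k) := by
  constructor
  · intro X
    exact ⟨1, 0, by simp⟩
  · rintro X Y ⟨a, b, h⟩
    refine ⟨a⁻¹, -((a⁻¹ : (ZMod v)ˣ) * b), ?_⟩
    rw [h, Finset.image_image]
    have : ((fun t => (a⁻¹ : (ZMod v)ˣ) * t + -((a⁻¹ : (ZMod v)ˣ) * b)) ∘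
        (fun t => (a : ZMod v) * t + b)) = id := by
      funext t
      simp only [Function.comp_apply, id_eq]
      rw [mul_add, Units.inv_mul_cancel_left]
      ring
    rw [this, Finset.image_id]
  · rintro X Y Z ⟨a, b, h⟩ ⟨a', b', h'⟩
    refine ⟨a' * a, (a' : ZMod v) * b + b', ?_⟩
    rw [h', h, Finset.image_image]
    congr 1
    funext t
    simp only [Function.comp_apply, Units.val_mul]
    ring

lemma card_smul_eq_zero {s : Finset (ZMod v)} {c : ZMod v}
    (h : s.image (fun y => y + c) = s) : s.card • c = 0 := by
  have h1 : ∑ x ∈ s.image (fun y => y + c), x = ∑ x ∈ s, x := by rw [h]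
  rw [Finset.sum_image (fun x _ y _ hxy => by simpa using hxy)] at h1
  rw [Finset.sum_add_distrib, Finset.sum_const] at h1
  exact (add_eq_left).mp h1

lemma period_eq_zero {X : Finset (ZMod v)} (hk : 3 ≤ k) (hX : X ∈ Bcon v k)
    {c : ZMod v} (h : X.image (fun y => y + c) = X) : c = 0 := by
  obtain ⟨h1, h2, _⟩ := hX
  have hd1 : addOrderOf c ∣ k := by
    rw [← h1]; exact addOrderOf_dvd_of_nsmul_eq_zero (card_smul_eq_zero h)
  -- X - X is also invariant under translation by c
  have hXX : (X - X).image (fun y => y + c) = X - X := by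
    ext d
    simp only [Finset.mem_image, Finset.mem_sub]
    constructor
    · rintro ⟨_, ⟨x, hx, y, hy, rfl⟩, rfl⟩
      have hxc : x + c ∈ X := by
        rw [← h]; exact Finset.mem_image.mpr ⟨x, hx, rfl⟩
      exact ⟨x + c, hxc, y, hy, by ring⟩
    · rintro ⟨x, hx, y, hy, rfl⟩
      have : x ∈ X.image (fun y => y + c) := by rw [h]; exact hx
      obtain ⟨x', hx', hxx'⟩ := Finset.mem_image.mp this
      exact ⟨x' - y, ⟨x', hx', y, hy, rfl⟩, by rw [← hxx']; ring⟩
  have hd2 : addOrderOf c ∣ k ^ 2 - k + 1 := by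
    rw [← h2]; exact addOrderOf_dvd_of_nsmul_eq_zero (card_smul_eq_zero hXX)
  have hsq : k ^ 2 - k + 1 = k * (k - 1) + 1 := by
    have : k * (k - 1) = k * k - k := by
      have := Nat.mul_pred k k
      simpa [Nat.pred_eq_sub_one] using this
    rw [this, sq]
  have hd3 : addOrderOf c ∣ k * (k - 1) := Dvd.dvd.mul_right hd1 _
  have hd4 : addOrderOf c ∣ 1 := by
    have := Nat.dvd_sub (hsq ▸ hd2) hd3
    simpa using this
  have h1 : addOrderOf c = 1 := Nat.dvd_one.mp hd4
  have h1c : (1 : ℕ) • c = 0 := addOrderOf_dvd_iff_nsmul_eq_zero.mp (by rw [h1])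
  simpa using h1c

lemma translate_inj {X : Finset (ZMod v)} (hk : 3 ≤ k) (hX : X ∈ Bcon v k)
    {c c' : ZMod v} (h : X.image (fun y => y + c) = X.image (fun y => y + c')) : c = c' := by
  have h2 : (X.image (fun y => y + c)).image (fun y => y + (-c')) =
      (X.image (fun y => y + c')).image (fun y => y + (-c')) := by rw [h]
  rw [Finset.image_image, Finset.image_image] at h2
  have e1 : ((fun y : ZMod v => y + -c') ∘ (fun y => y + c)) = fun y => y + (c - c') := by
    funext y; simp [Function.comp]; ring
  have e2 : ((fun y : ZMod v => y + -c') ∘ (fun y => y + c')) = fun y => y := by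
    funext y; simp [Function.comp]
  rw [e1, e2] at h2
  have h3 : X.image (fun y => y) = X := by simpa using Finset.image_id (s := X)
  rw [h3] at h2
  exact sub_eq_zero.mp (period_eq_zero hk hX h2)

end OrbitAux

namespace Part2

variable {v k : ℕ} [NeZero v]

lemma exists_x_iff {X : Finset (ZMod v)} (l : (ZMod v)ˣ) (h0 : (0 : ZMod v) ∈ X) :
    (∃ x ∈ X, X.image (fun y => (l : ZMod v) * y) = X.image (fun y => y - x)) ↔
      ∃ c, X.image (fun y => (l : ZMod v) * y) = X.image (fun y => y + c) := by
  constructor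
  · rintro ⟨x, hx, h⟩
    refine ⟨-x, ?_⟩
    rw [h]
    congr 1
    funext y
    rw [sub_eq_add_neg]
  · rintro ⟨c, h⟩
    have h0l : (0 : ZMod v) ∈ X.image (fun y => (l : ZMod v) * y) :=
      Finset.mem_image.mpr ⟨0, h0, mul_zero _⟩
    rw [h] at h0l
    obtain ⟨x', hx', hx'c⟩ := Finset.mem_image.mp h0l
    have hx'eq : x' = -c := by linear_combination hx'c
    refine ⟨-c, by rw [← hx'eq]; exact hx', ?_⟩
    rw [h]
    congr 1
    funext y
    rw [sub_eq_add_neg, neg_neg]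

lemma g_eq_iff (Y : Finset (ZMod v)) (a a₀ : (ZMod v)ˣ) (t t₀ : ZMod v) :
    Y.image (fun s => (a : ZMod v) * (s - t)) = Y.image (fun s => (a₀ : ZMod v) * (s - t₀)) ↔
      Y.image (fun y => ((a * a₀⁻¹ : (ZMod v)ˣ) : ZMod v) * y) =
        Y.image (fun y => y + (((a * a₀⁻¹ : (ZMod v)ˣ) : ZMod v) * t - t₀)) := by
  set u : ZMod v := ((a * a₀⁻¹ : (ZMod v)ˣ) : ZMod v) with hu_def
  have hu : (a₀ : ZMod v) * u = a := by
    rw [hu_def, Units.val_mul]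
    calc (a₀ : ZMod v) * ((a : ZMod v) * ((a₀⁻¹ : (ZMod v)ˣ) : ZMod v))
        = (a : ZMod v) * ((a₀ : ZMod v) * ((a₀⁻¹ : (ZMod v)ˣ) : ZMod v)) := by ring
      _ = a := by rw [Units.mul_inv, mul_one]
  have e1 : (fun s : ZMod v => (a : ZMod v) * (s - t)) =
      (fun s : ZMod v => (a₀ : ZMod v) * (u * s + -(u * t))) := by
    funext s
    rw [← hu]
    ring
  have e2 : (fun s : ZMod v => (a₀ : ZMod v) * (s - t₀)) =
      (fun s : ZMod v => (a₀ : ZMod v) * ((s + (u * t - t₀)) + -(u * t))) := by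
    funext s
    ring
  rw [e1, e2]
  exact (OrbitAux.image_mul_left_inj a₀).trans (OrbitAux.image_add_right_inj _)

lemma condX_iff (Y : Finset (ZMod v)) (a l : (ZMod v)ˣ) (t : ZMod v) :
    (∃ c, (Y.image (fun s => (a : ZMod v) * (s - t))).image (fun y => (l : ZMod v) * y)
        = (Y.image (fun s => (a : ZMod v) * (s - t))).image (fun y => y + c))
      ↔ (∃ c, Y.image (fun y => (l : ZMod v) * y) = Y.image (fun y => y + c)) := by
  have hstep : ∀ c : ZMod v,
      ((Y.image (fun s => (a : ZMod v) * (s - t))).image (fun y => (l : ZMod v) * y)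
        = (Y.image (fun s => (a : ZMod v) * (s - t))).image (fun y => y + c))
      ↔ (Y.image (fun y => (l : ZMod v) * y) =
          Y.image (fun y => y + ((l : ZMod v) * t - t + ((a⁻¹ : (ZMod v)ˣ) : ZMod v) * c))) := by
    intro c
    rw [Finset.image_image, Finset.image_image]
    have E1 : ((fun y => (l : ZMod v) * y) ∘ (fun s => (a : ZMod v) * (s - t))) =
        fun s => ((l * a : (ZMod v)ˣ) : ZMod v) * (s - t) := by
      funext s
      simp only [Function.comp_apply, Units.val_mul]
      ring
    have E2 : ((fun y => y + c) ∘ (fun s => (a : ZMod v) * (s - t))) =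
        fun s => (a : ZMod v) * (s - (t - ((a⁻¹ : (ZMod v)ˣ) : ZMod v) * c)) := by
      funext s
      simp only [Function.comp_apply]
      linear_combination (-c) * Units.mul_inv a
    rw [E1, E2]
    have hg := g_eq_iff Y (l * a) a t (t - ((a⁻¹ : (ZMod v)ˣ) : ZMod v) * c)
    rw [mul_inv_cancel_right] at hg
    rw [hg]
    have : (l : ZMod v) * t - (t - ((a⁻¹ : (ZMod v)ˣ) : ZMod v) * c) =
        (l : ZMod v) * t - t + ((a⁻¹ : (ZMod v)ˣ) : ZMod v) * c := by ring
    rw [this]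
  constructor
  · rintro ⟨c, h⟩
    exact ⟨_, (hstep c).mp h⟩
  · rintro ⟨c', h⟩
    refine ⟨(a : ZMod v) * (c' - (l : ZMod v) * t + t), (hstep _).mpr ?_⟩
    have hc : (l : ZMod v) * t - t +
        ((a⁻¹ : (ZMod v)ˣ) : ZMod v) * ((a : ZMod v) * (c' - (l : ZMod v) * t + t)) = c' := by
      rw [Units.inv_mul_cancel_left]
      ring
    rw [hc]
    exact h

end Part2

namespace Part3

open OrbitAux Part2

variable {v k : ℕ} [NeZero v]

open Classical in
noncomputable def Ms (v : ℕ) [NeZero v] (Y : Finset (ZMod v)) : Finset (ZMod v)ˣ :=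
  Finset.univ.filter
    (fun l => ∃ c, Y.image (fun y => (l : ZMod v) * y) = Y.image (fun y => y + c))

open Classical in
noncomputable def Ss (v : ℕ) [NeZero v] (Y : Finset (ZMod v)) : Finset (Finset (ZMod v)) :=
  (Finset.univ ×ˢ Y).image
    (fun q : (ZMod v)ˣ × ZMod v => Y.image (fun s => (q.1 : ZMod v) * (s - q.2)))

lemma mem_Ms_iff {Y : Finset (ZMod v)} {l : (ZMod v)ˣ} :
    l ∈ Ms v Y ↔ ∃ c, Y.image (fun y => (l : ZMod v) * y) = Y.image (fun y => y + c) := by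
  classical
  simp [Ms]

lemma mem_Ss_iff {Y X : Finset (ZMod v)} :
    X ∈ Ss v Y ↔ ∃ a : (ZMod v)ˣ, ∃ t ∈ Y, Y.image (fun s => (a : ZMod v) * (s - t)) = X := by
  classical
  simp only [Ss, Finset.mem_image, Finset.mem_product, Finset.mem_univ, true_and, Prod.exists]

/-- C3: the counting identity `|Ms Y| * |Ss Y| = φ(v) * k`. -/
lemma card_Ms_mul_card_Ss (hk : 3 ≤ k) {Y : Finset (ZMod v)} (hYB : Y ∈ Bcon v k) :
    (Ms v Y).card * (Ss v Y).card = Nat.totient v * k := by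
  classical
  have hcard : (Finset.univ ×ˢ Y : Finset ((ZMod v)ˣ × ZMod v)).card = Nat.totient v * k := by
    rw [Finset.card_product, Finset.card_univ, ZMod.card_units_eq_totient, hYB.1]
  rw [← hcard]
  rw [Finset.card_eq_sum_card_fiberwise
      (f := fun q : (ZMod v)ˣ × ZMod v => Y.image (fun s => (q.1 : ZMod v) * (s - q.2)))
      (t := Ss v Y)
      (fun q hq => mem_Ss_iff.mpr ⟨q.1, q.2, (Finset.mem_product.mp hq).2, rfl⟩)]
  have hfib : ∀ X ∈ Ss v Y,
      ((Finset.univ ×ˢ Y).filter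
        (fun q : (ZMod v)ˣ × ZMod v => Y.image (fun s => (q.1 : ZMod v) * (s - q.2)) = X)).card
      = (Ms v Y).card := by
    intro X hX
    obtain ⟨a₀, t₀, ht₀, hX₀⟩ := mem_Ss_iff.mp hX
    refine Finset.card_bij (fun q _ => q.1 * a₀⁻¹) ?_ ?_ ?_
    · rintro ⟨a, t⟩ hq
      obtain ⟨hqmem, hqeq⟩ := Finset.mem_filter.mp hq
      rw [← hX₀] at hqeq
      exact mem_Ms_iff.mpr ⟨_, (g_eq_iff Y a a₀ t t₀).mp hqeq⟩
    · rintro ⟨a, t⟩ hq ⟨a', t'⟩ hq' heq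
      obtain ⟨hqmem, hqeq⟩ := Finset.mem_filter.mp hq
      obtain ⟨hqmem', hqeq'⟩ := Finset.mem_filter.mp hq'
      have ha : a = a' := by
        have := mul_right_cancel heq
        exact this
      subst ha
      have h2 : Y.image (fun s => (a : ZMod v) * (s - t)) =
          Y.image (fun s => (a : ZMod v) * (s - t')) := by rw [hqeq, hqeq']
      have h3 : Y.image (fun s => s - t) = Y.image (fun s => s - t') :=
        (image_mul_left_inj a).mp h2
      have h4 : Y.image (fun s => s + (-t)) = Y.image (fun s => s + (-t')) := by
        have e : ∀ c : ZMod v, (fun s : ZMod v => s - c) = (fun s : ZMod v => s + (-c)) := by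
          intro c; funext s; rw [sub_eq_add_neg]
        rw [← e, ← e]; exact h3
      have := translate_inj hk hYB h4
      have ht : t = t' := by
        have := neg_injective this
        exact this
      simp [ht]
    · intro l hl
      obtain ⟨c, hc⟩ := mem_Ms_iff.mp hl
      have htY : ((l⁻¹ : (ZMod v)ˣ) : ZMod v) * (c + t₀) ∈ Y := by
        have h1 : t₀ + c ∈ Y.image (fun y => y + c) := Finset.mem_image.mpr ⟨t₀, ht₀, rfl⟩
        rw [← hc] at h1
        obtain ⟨s, hs, hsl⟩ := Finset.mem_image.mp h1
        have : ((l⁻¹ : (ZMod v)ˣ) : ZMod v) * (c + t₀) = s := by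
          rw [add_comm c t₀, ← hsl, Units.inv_mul_cancel_left]
        rw [this]; exact hs
      refine ⟨(l * a₀, ((l⁻¹ : (ZMod v)ˣ) : ZMod v) * (c + t₀)), ?_, ?_⟩
      · rw [Finset.mem_filter]
        constructor
        · exact Finset.mem_product.mpr ⟨Finset.mem_univ _, htY⟩
        · rw [← hX₀]
          have hg := g_eq_iff Y (l * a₀) a₀ (((l⁻¹ : (ZMod v)ˣ) : ZMod v) * (c + t₀)) t₀
          rw [mul_inv_cancel_right] at hg
          refine hg.mpr ?_
          have hlt : (l : ZMod v) * (((l⁻¹ : (ZMod v)ˣ) : ZMod v) * (c + t₀)) - t₀ = c := by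
            rw [Units.mul_inv_cancel_left]; ring
          simp only [hlt]; exact hc
      · show l * a₀ * a₀⁻¹ = l
        exact mul_inv_cancel_right l a₀
  rw [Finset.sum_congr rfl hfib, Finset.sum_const, smul_eq_mul, mul_comm]

end Part3

namespace Part4

open OrbitAux Part2 Part3

variable {v k : ℕ} [NeZero v]

open Classical in
noncomputable def Ps (v k : ℕ) [NeZero v] : Finset ((ZMod v)ˣ × Finset (ZMod v)) :=
  Finset.univ.filter (fun p => p.2 ∈ Bcon v k ∧ (0 : ZMod v) ∈ p.2 ∧
    ∃ x ∈ p.2, p.2.image (fun y => (p.1 : ZMod v) * y) = p.2.image (fun y => y - x))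

open Classical in
noncomputable def qm (v k : ℕ) [NeZero v] (hNE : Nonempty (Bcon v k))
    (p : (ZMod v)ˣ × Finset (ZMod v)) : Quot (affRel v k) :=
  if h : p.2 ∈ Bcon v k then Quot.mk _ (⟨p.2, h⟩ : Bcon v k) else Quot.mk _ hNE.some

open Classical in
lemma fiber_eq (hk : 3 ≤ k) (hNE : Nonempty (Bcon v k)) {Y : Finset (ZMod v)}
    (hYB : Y ∈ Bcon v k) (h0Y : (0 : ZMod v) ∈ Y) :
    (Ps v k).filter (fun p => qm v k hNE p = Quot.mk (affRel v k) ⟨Y, hYB⟩) =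
      (Ms v Y) ×ˢ (Ss v Y) := by
  classical
  ext p
  simp only [Ps, Finset.mem_filter, Finset.mem_univ, true_and, Finset.mem_product]
  constructor
  · rintro ⟨⟨hB, h0, hx⟩, hfp⟩
    simp only [qm, dif_pos hB] at hfp
    have hrel : affRel v k ⟨p.2, hB⟩ ⟨Y, hYB⟩ :=
      (Equivalence.eqvGen_iff affRel_equivalence).mp (Quot.eq.mp hfp)
    obtain ⟨a, b, hab0⟩ := affRel_equivalence.symm hrel
    have hab : p.2 = Y.image (fun t => (a : ZMod v) * t + b) := hab0
    have h0X := h0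
    rw [hab] at h0X
    obtain ⟨s₀, hs₀Y, hs₀⟩ := Finset.mem_image.mp h0X
    have hXY : Y.image (fun s => (a : ZMod v) * (s - s₀)) = p.2 := by
      rw [hab]
      congr 1
      funext s
      linear_combination -hs₀
    constructor
    · rw [← hXY] at hx h0
      exact mem_Ms_iff.mpr ((condX_iff Y a p.1 s₀).mp ((exists_x_iff p.1 h0).mp hx))
    · exact mem_Ss_iff.mpr ⟨a, s₀, hs₀Y, hXY⟩
  · rintro ⟨hl, hXs⟩
    obtain ⟨a, t, htY, hXeq⟩ := mem_Ss_iff.mp hXs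
    have hB : p.2 ∈ Bcon v k := by
      rw [← hXeq]
      have e : (fun s : ZMod v => (a : ZMod v) * (s - t)) =
          (fun s : ZMod v => (a : ZMod v) * s + (-((a : ZMod v) * t))) := by
        funext s; ring
      rw [e]
      exact Bcon_affine hYB a _
    have h0 : (0 : ZMod v) ∈ p.2 := by
      rw [← hXeq]
      exact Finset.mem_image.mpr ⟨t, htY, by rw [sub_self, mul_zero]⟩
    have hx : ∃ x ∈ p.2, p.2.image (fun y => (p.1 : ZMod v) * y) =
        p.2.image (fun y => y - x) := by
      rw [← hXeq]
      refine (exists_x_iff p.1 (Finset.mem_image.mpr ⟨t, htY, by rw [sub_self, mul_zero]⟩)).mpr ?_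
      exact (condX_iff Y a p.1 t).mpr (mem_Ms_iff.mp hl)
    refine ⟨⟨hB, h0, hx⟩, ?_⟩
    simp only [qm, dif_pos hB]
    refine Quot.sound (affRel_equivalence.symm ⟨a, -((a : ZMod v) * t), ?_⟩)
    show p.2 = Y.image (fun s => (a : ZMod v) * s + (-((a : ZMod v) * t)))
    rw [← hXeq]
    congr 1
    funext s
    ring

end Part4

/-- `N(v,k,l)`: the number of `X ∈ B_con(v,k)` with `0 ∈ X` such that `lX = X - x`
for some `x ∈ X`. -/
noncomputable def Nparam (v k : ℕ) (l : (ZMod v)ˣ) : ℕ :=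
  Nat.card {X : Finset (ZMod v) // X ∈ Bcon v k ∧ (0 : ZMod v) ∈ X ∧
    ∃ x ∈ X, X.image (fun y => (l : ZMod v) * y) = X.image (fun y => y - x)}

open OrbitAux Part2 Part3 Part4

/-- `k · φ(v) · N = Σ_{l ∈ Z_v*} N(v,k,l)`, where `N` is the number of
orbits of `AGL₁(v)` on `B_con(v,k)`. -/
theorem orbit_count_formula
    (v k : ℕ) [NeZero v] (hk : 3 ≤ k) (hv : k ^ 2 - k + 1 ≤ v) :
    k * Nat.totient v * Nat.card (Quot (affRel v k)) = ∑ l : (ZMod v)ˣ, Nparam v k l := by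
  classical
  have hNp : ∀ l : (ZMod v)ˣ, Nparam v k l =
      ((Finset.univ : Finset (Finset (ZMod v))).filter
        (fun X => X ∈ Bcon v k ∧ (0 : ZMod v) ∈ X ∧
          ∃ x ∈ X, X.image (fun y => (l : ZMod v) * y) = X.image (fun y => y - x))).card := by
    intro l
    simp only [Nparam]
    rw [Nat.card_eq_fintype_card, Fintype.card_subtype]
  rcases isEmpty_or_nonempty (Bcon v k) with hE | hNE
  · haveI : IsEmpty (Quot (affRel v k)) :=
      ⟨fun q => Quot.inductionOn q fun a => hE.elim a⟩
    rw [Nat.card_of_isEmpty, mul_zero]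
    symm
    refine Finset.sum_eq_zero fun l _ => ?_
    rw [hNp l, Finset.card_eq_zero]
    refine Finset.eq_empty_of_forall_notMem fun X hX => ?_
    exact hE.false ⟨X, (Finset.mem_filter.mp hX).2.1⟩
  · haveI : Fintype (Quot (affRel v k)) := Fintype.ofFinite _
    have hPs : (Ps v k).card = ∑ l : (ZMod v)ˣ, Nparam v k l := by
      rw [Finset.card_eq_sum_card_fiberwise (f := Prod.fst) (s := Ps v k)
        (t := Finset.univ) (fun _ _ => Finset.mem_univ _)]
      refine Finset.sum_congr rfl fun l _ => ?_
      rw [hNp l]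
      refine Finset.card_bij (fun p _ => p.2) ?_ ?_ ?_
      · intro p hp
        obtain ⟨hp1, hp2⟩ := Finset.mem_filter.mp hp
        obtain ⟨-, hp3⟩ := Finset.mem_filter.mp hp1
        rw [hp2] at hp3
        exact Finset.mem_filter.mpr ⟨Finset.mem_univ _, hp3⟩
      · intro p hp q hq h2
        have e1 : p.1 = l := (Finset.mem_filter.mp hp).2
        have e2 : q.1 = l := (Finset.mem_filter.mp hq).2
        exact Prod.ext (e1.trans e2.symm) h2
      · intro X hX
        refine ⟨(l, X), Finset.mem_filter.mpr ⟨?_, rfl⟩, rfl⟩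
        exact Finset.mem_filter.mpr ⟨Finset.mem_univ _, (Finset.mem_filter.mp hX).2⟩
    rw [← hPs]
    rw [Finset.card_eq_sum_card_fiberwise (f := qm v k hNE) (s := Ps v k)
      (t := Finset.univ) (fun _ _ => Finset.mem_univ _)]
    have hfib : ∀ o : Quot (affRel v k),
        ((Ps v k).filter (fun p => qm v k hNE p = o)).card = Nat.totient v * k := by
      intro o
      obtain ⟨Y', rfl⟩ := Quot.mk_surjective o
      have hcard3 : 0 < Y'.val.card := by rw [Y'.2.1]; omega
      obtain ⟨e, he⟩ := Finset.card_pos.mp hcard3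
      set Y : Finset (ZMod v) :=
        Y'.val.image (fun t => ((1 : (ZMod v)ˣ) : ZMod v) * t + (-e)) with hYdef
      have hYB : Y ∈ Bcon v k := Bcon_affine Y'.2 1 (-e)
      have h0Y : (0 : ZMod v) ∈ Y := Finset.mem_image.mpr ⟨e, he, by simp⟩
      have ho : Quot.mk (affRel v k) Y' = Quot.mk _ (⟨Y, hYB⟩ : Bcon v k) :=
        Quot.sound ⟨1, -e, rfl⟩
      rw [ho, fiber_eq hk hNE hYB h0Y, Finset.card_product, card_Ms_mul_card_Ss hk hYB]
    rw [Finset.sum_congr rfl (fun o _ => hfib o), Finset.sum_const, smul_eq_mul,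
      Finset.card_univ, ← Nat.card_eq_fintype_card]
    ring
end

section
/- Let v > 4 be an odd integer. Then the number of sets X ∈ B_con(v,3) with 0 ∈ X equals φ(v)(Φ(v) − 6)/2, where φ is Euler's totient function and Φ(v) = v·∏_{p | v, p prime} (1 + 1/p). -/
open scoped Pointwise
open ArithmeticFunction Finset

/-- `B_con(v,3)`: base lines of connected cyclic configurations of type (v₃). -/
def Bcon3 (v : ℕ) : Set (Finset (ZMod v)) :=
  {X | X.card = 3 ∧ (X - X).card = 7 ∧
    AddSubgroup.closure ((X - X : Finset (ZMod v)) : Set (ZMod v)) = ⊤}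


section Helpers
variable {v : ℕ}




lemma top_of_one_mem [NeZero v] (S : AddSubgroup (ZMod v)) (h : (1 : ZMod v) ∈ S) : S = ⊤ := by
  rw [eq_top_iff]
  intro x _
  have hx : x.val • (1 : ZMod v) = x := by
    simp [nsmul_eq_mul, ZMod.natCast_rightInverse x]
  exact hx ▸ AddSubgroup.nsmul_mem S h x.val

lemma closure_pair_top_iff [NeZero v] (a b : ZMod v) :
    AddSubgroup.closure ({a, b} : Set (ZMod v)) = ⊤ ↔
      Nat.gcd (Nat.gcd a.val b.val) v = 1 := by
  constructor
  · intro h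
    have h1 : (1 : ZMod v) ∈ AddSubgroup.closure ({a, b} : Set (ZMod v)) := h ▸ trivial
    rw [AddSubgroup.mem_closure_pair] at h1
    obtain ⟨m, n, hmn⟩ := h1
    have hcast : ((m * a.val + n * b.val - 1 : ℤ) : ZMod v) = 0 := by
      push_cast
      rw [ZMod.natCast_val, ZMod.natCast_val, ZMod.cast_id, ZMod.cast_id, ← hmn,
        zsmul_eq_mul, zsmul_eq_mul]
      ring
    rw [ZMod.intCast_zmod_eq_zero_iff_dvd] at hcast
    obtain ⟨k, hk⟩ := hcast
    set g : ℕ := Nat.gcd (Nat.gcd a.val b.val) v with hg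
    have hga : (g : ℤ) ∣ (a.val : ℤ) :=
      Int.natCast_dvd_natCast.mpr ((Nat.gcd_dvd_left _ _).trans (Nat.gcd_dvd_left _ _))
    have hgb : (g : ℤ) ∣ (b.val : ℤ) :=
      Int.natCast_dvd_natCast.mpr ((Nat.gcd_dvd_left _ _).trans (Nat.gcd_dvd_right _ _))
    have hgv : (g : ℤ) ∣ (v : ℤ) := Int.natCast_dvd_natCast.mpr (Nat.gcd_dvd_right _ _)
    have : (g : ℤ) ∣ 1 := by
      have : (1 : ℤ) = m * a.val + n * b.val - k * v := by linarith [hk]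
      rw [this]
      exact dvd_sub (dvd_add (hga.mul_left m) (hgb.mul_left n)) (hgv.mul_left k)
    exact_mod_cast Int.eq_one_of_dvd_one (by positivity) this
  · intro h
    apply top_of_one_mem
    rw [AddSubgroup.mem_closure_pair]
    set A := Nat.gcdA a.val b.val
    set B := Nat.gcdB a.val b.val
    set C := Nat.gcdA (Nat.gcd a.val b.val) v
    set D := Nat.gcdB (Nat.gcd a.val b.val) v
    have h1 : (Nat.gcd a.val b.val : ℤ) = a.val * A + b.val * B :=
      Nat.gcd_eq_gcd_ab a.val b.val
    have h2 : ((1 : ℕ) : ℤ) = (Nat.gcd a.val b.val) * C + v * D := by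
      rw [← h]; exact Nat.gcd_eq_gcd_ab _ v
    have key : (1 : ℤ) = a.val * (A * C) + b.val * (B * C) + v * D := by
      push_cast at h2
      linear_combination h2 + C * h1
    refine ⟨A * C, B * C, ?_⟩
    have := congrArg (fun z : ℤ => (z : ZMod v)) key
    push_cast at this
    rw [ZMod.natCast_val, ZMod.natCast_val, ZMod.cast_id, ZMod.cast_id,
      ZMod.natCast_self] at this
    rw [zsmul_eq_mul, zsmul_eq_mul]
    push_cast
    linear_combination -this

lemma closure_pair_collapse (a b : ZMod v)
    (hb : b ∈ AddSubgroup.closure ({a} : Set (ZMod v))) :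
    AddSubgroup.closure ({a, b} : Set (ZMod v)) = AddSubgroup.closure {a} := by
  apply le_antisymm
  · rw [AddSubgroup.closure_le]
    intro x hx
    rcases hx with rfl | hx
    · exact AddSubgroup.subset_closure rfl
    · simpa using hx ▸ hb
  · exact AddSubgroup.closure_mono (by simp)

lemma closure_single_top_iff [NeZero v] (a : ZMod v) :
    AddSubgroup.closure ({a} : Set (ZMod v)) = ⊤ ↔ Nat.gcd a.val v = 1 := by
  have h := closure_pair_top_iff a a
  rw [Set.pair_eq_singleton, Nat.gcd_self] at h
  exact h

lemma gcd_cond_collapse [NeZero v] (a b : ZMod v)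
    (hb : b ∈ AddSubgroup.closure ({a} : Set (ZMod v))) :
    Nat.gcd (Nat.gcd a.val b.val) v = 1 ↔ Nat.gcd a.val v = 1 := by
  rw [← closure_pair_top_iff, closure_pair_collapse a b hb, closure_single_top_iff]

lemma not_cop_of_three [NeZero v] (hv4 : 4 < v) (a b : ZMod v)
    (h3a : 3*a = 0) (h3b : 3*b = 0) :
    Nat.gcd (Nat.gcd a.val b.val) v ≠ 1 := by
  intro h
  rw [← closure_pair_top_iff] at h
  have h1 : (1 : ZMod v) ∈ AddSubgroup.closure ({a, b} : Set (ZMod v)) := h ▸ trivial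
  rw [AddSubgroup.mem_closure_pair] at h1
  obtain ⟨m, n, hmn⟩ := h1
  rw [zsmul_eq_mul, zsmul_eq_mul] at hmn
  have h3 : (3 : ZMod v) = 0 := by
    linear_combination (-3 : ZMod v) * hmn + ((m : ZMod v)) * h3a + ((n : ZMod v)) * h3b
  have : ((3 : ℕ) : ZMod v) = 0 := by exact_mod_cast h3
  rw [ZMod.natCast_eq_zero_iff] at this
  have := Nat.le_of_dvd (by norm_num) this
  omega

lemma two_unit (hodd : Odd v) : IsUnit (2 : ZMod v) := by
  haveI : NeZero v := ⟨by rintro rfl; simpa using hodd⟩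
  have h2 : ((2 : ℕ) : ZMod v) = 2 := by norm_cast
  rw [← h2, ZMod.isUnit_iff_coprime]
  simpa [Nat.coprime_two_left] using hodd

lemma diff_set_eq (a b : ZMod v) :
    ({0,a,b} : Finset (ZMod v)) - {0,a,b} = {0, a, -a, b, -b, a-b, b-a} := by
  ext x
  simp only [Finset.mem_sub, Finset.mem_insert, Finset.mem_singleton]
  constructor
  · rintro ⟨y, (rfl|rfl|rfl), z, (rfl|rfl|rfl), rfl⟩ <;> simp
  · rintro (h|h|h|h|h|h|h)
    · exact ⟨0, by simp, 0, by simp, by simp [h]⟩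
    · exact ⟨a, by simp, 0, by simp, by simp [h]⟩
    · exact ⟨0, by simp, a, by simp, by simp [h]⟩
    · exact ⟨b, by simp, 0, by simp, by simp [h]⟩
    · exact ⟨0, by simp, b, by simp, by simp [h]⟩
    · exact ⟨a, by simp, b, by simp, by simp [h]⟩
    · exact ⟨b, by simp, a, by simp, by simp [h]⟩


lemma card7_iff (hodd : Odd v) (a b : ZMod v) (ha : a ≠ 0) (hb : b ≠ 0) (hab : a ≠ b) :
    (({0,a,b} : Finset (ZMod v)) - {0,a,b}).card = 7 ↔
      (b ≠ -a ∧ b ≠ 2*a ∧ a ≠ 2*b) := by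
  have hcan : ∀ x y : ZMod v, 2*x = 2*y → x = y := fun x y h =>
    (two_unit hodd).mul_left_cancel h
  have hE : ({0,a,b} : Finset (ZMod v)) - {0,a,b} =
      ([0, a, -a, b, -b, a-b, b-a] : List (ZMod v)).toFinset := by
    rw [diff_set_eq]; simp [List.toFinset_cons]
  rw [hE, List.card_toFinset]
  have hnd : ([0, a, -a, b, -b, a-b, b-a] : List (ZMod v)).dedup.length = 7 ↔
      ([0, a, -a, b, -b, a-b, b-a] : List (ZMod v)).Nodup := by
    constructor
    · intro h
      rw [← List.dedup_eq_self]
      exact List.Sublist.eq_of_length (List.dedup_sublist _) (by simp [h])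
    · intro h
      rw [List.dedup_eq_self.mpr h]; rfl
  rw [hnd]
  simp only [List.nodup_cons, List.mem_cons, List.not_mem_nil, or_false,
    List.nodup_nil, and_true, not_or]
  constructor
  · rintro ⟨-, ⟨-, -, h9, -, h11⟩, -, ⟨-, h17, -⟩, -, -, -⟩
    refine ⟨fun h => h9 (by first | linear_combination h | linear_combination -h), fun h => h11 (by first | linear_combination h | linear_combination -h),
      fun h => h17 (by first | linear_combination h | linear_combination -h)⟩
  · rintro ⟨hna, h2a, h2b⟩
    refine ⟨⟨fun h => ha h.symm, fun h => ha (by first | linear_combination h | linear_combination -h),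
        fun h => hb h.symm, fun h => hb (by first | linear_combination h | linear_combination -h),
        fun h => hab (by first | linear_combination h | linear_combination -h), fun h => hab (by first | linear_combination h | linear_combination -h)⟩,
      ⟨fun h => ha (hcan a 0 (by first | linear_combination h | linear_combination -h)), hab,
        fun h => hna (by first | linear_combination h | linear_combination -h), fun h => hb (by first | linear_combination h | linear_combination -h),
        fun h => h2a (by first | linear_combination h | linear_combination -h)⟩,
      ⟨fun h => hna (by first | linear_combination h | linear_combination -h), fun h => hab (by first | linear_combination h | linear_combination -h),
        fun h => h2a (by first | linear_combination h | linear_combination -h), fun h => hb (by first | linear_combination h | linear_combination -h)⟩,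
      ⟨fun h => hb (hcan b 0 (by first | linear_combination h | linear_combination -h)),
        fun h => h2b (by first | linear_combination h | linear_combination -h), fun h => ha (by first | linear_combination h | linear_combination -h)⟩,
      ⟨fun h => ha (by first | linear_combination h | linear_combination -h), fun h => h2b (by first | linear_combination h | linear_combination -h)⟩,
      fun h => hab (hcan a b (by first | linear_combination h | linear_combination -h)), not_false⟩

-- closure {a, b} = closure {a} when b ∈ closure {a}
lemma mem_closure_singleton_self (a : ZMod v) :
    a ∈ AddSubgroup.closure ({a} : Set (ZMod v)) := AddSubgroup.subset_closure rfl

-- card of units filter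
lemma card_coprime_filter [NeZero v] :
    (Finset.univ.filter fun b : ZMod v => Nat.gcd b.val v = 1).card = Nat.totient v := by
  classical
  rw [← ZMod.card_units_eq_totient v]
  rw [Fintype.card_congr ZMod.unitsEquivCoprime]
  rw [Fintype.card_subtype]


-- count of multiples
lemma card_dvd_val_filter [NeZero v] {d : ℕ} (hd : 0 < d) (hdv : d ∣ v) :
    (Finset.univ.filter fun a : ZMod v => d ∣ a.val).card = v / d := by
  classical
  have hv : 0 < v := Nat.pos_of_ne_zero (NeZero.ne v)
  rw [← Finset.card_range (v / d)]
  apply Finset.card_bij' (fun a _ => a.val / d) (fun i _ => ((i * d : ℕ) : ZMod v))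
  · intro a ha
    simp only [Finset.mem_filter, Finset.mem_univ, true_and] at ha
    simp only [Finset.mem_range]
    exact Nat.div_lt_div_of_lt_of_dvd hdv (ZMod.val_lt a)
  · intro i hi
    simp only [Finset.mem_range] at hi
    simp only [Finset.mem_filter, Finset.mem_univ, true_and]
    rw [ZMod.val_cast_of_lt]
    · exact ⟨i, Nat.mul_comm i d⟩
    · calc i * d < (v / d) * d := (Nat.mul_lt_mul_right hd).mpr hi
        _ ≤ v := Nat.div_mul_le_self v d
  · intro a ha
    simp only [Finset.mem_filter, Finset.mem_univ, true_and] at ha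
    rw [Nat.div_mul_cancel ha, ZMod.natCast_val, ZMod.cast_id]
  · intro i hi
    simp only [Finset.mem_range] at hi
    rw [ZMod.val_cast_of_lt, Nat.mul_div_cancel _ hd]
    calc i * d < (v / d) * d := (Nat.mul_lt_mul_right hd).mpr hi
      _ ≤ v := Nat.div_mul_le_self v d

lemma squarefree_prod_primes {s : Finset ℕ} (hs : ∀ p ∈ s, p.Prime) :
    Squarefree (∏ p ∈ s, p) := by
  classical
  induction s using Finset.induction_on with
  | empty => simpa using squarefree_one
  | @insert p s hp ih =>
    rw [Finset.prod_insert hp]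
    have hpp : p.Prime := hs p (Finset.mem_insert_self p s)
    have hco : Nat.Coprime p (∏ q ∈ s, q) :=
      Nat.Coprime.prod_right fun q hq =>
        (Nat.coprime_primes hpp (hs q (Finset.mem_insert_of_mem hq))).mpr
          (fun h => hp (h ▸ hq))
    exact (Nat.squarefree_mul hco).mpr ⟨hpp.squarefree, ih fun q hq => hs q (Finset.mem_insert_of_mem hq)⟩

-- count of multiples
lemma card_T [NeZero v] :
    ((Finset.univ.filter fun p : ZMod v × ZMod v =>
        Nat.gcd (Nat.gcd p.1.val p.2.val) v = 1).card : ℤ) =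
      ∑ d ∈ v.divisors, (ArithmeticFunction.moebius d) * ((v / d : ℕ) : ℤ)^2 := by
  classical
  have hv : v ≠ 0 := NeZero.ne v
  have key : ∀ p : ZMod v × ZMod v,
      ((if Nat.gcd (Nat.gcd p.1.val p.2.val) v = 1 then 1 else 0 : ℤ)) =
      ∑ d ∈ v.divisors, if d ∣ p.1.val ∧ d ∣ p.2.val then moebius d else 0 := by
    intro p
    set g := Nat.gcd (Nat.gcd p.1.val p.2.val) v with hg
    have h1 : (if g = 1 then 1 else 0 : ℤ) = ∑ d ∈ g.divisors, moebius d := by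
      have := congrArg (fun f : ArithmeticFunction ℤ => f g) moebius_mul_coe_zeta
      simp only [coe_mul_zeta_apply, one_apply] at this
      exact this.symm
    rw [h1, ← Nat.divisors_filter_dvd_of_dvd hv (Nat.gcd_dvd_right _ v), Finset.sum_filter]
    apply Finset.sum_congr rfl
    intro d hd
    have hdv : d ∣ v := (Nat.mem_divisors.mp hd).1
    have hiff : (d ∣ Nat.gcd (Nat.gcd p.1.val p.2.val) v) ↔ (d ∣ p.1.val ∧ d ∣ p.2.val) := by
      rw [Nat.dvd_gcd_iff, Nat.dvd_gcd_iff]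
      simp [hdv]
    simp only [hiff]
  rw [Finset.card_filter]
  push_cast
  rw [Finset.sum_congr rfl fun p _ => key p, Finset.sum_comm]
  apply Finset.sum_congr rfl
  intro d hd
  obtain ⟨hdv, -⟩ := Nat.mem_divisors.mp hd
  have hd0 : 0 < d := Nat.pos_of_mem_divisors hd
  rw [← Finset.sum_filter]
  have : (Finset.univ.filter fun p : ZMod v × ZMod v => d ∣ p.1.val ∧ d ∣ p.2.val) =
      (Finset.univ.filter fun a : ZMod v => d ∣ a.val) ×ˢ
      (Finset.univ.filter fun a : ZMod v => d ∣ a.val) := by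
    ext ⟨x, y⟩
    simp
  rw [this, Finset.sum_const, Finset.card_product, card_dvd_val_filter hd0 hdv,
    nsmul_eq_mul, Nat.cast_mul, ← Int.natCast_div]
  ring


lemma sum_moebius_eq_prod (hv : v ≠ 0) :
    (∑ d ∈ v.divisors, ((moebius d : ℤ) : ℚ) * ((v / d : ℕ) : ℚ)^2) =
      (v : ℚ)^2 * ∏ p ∈ v.primeFactors, (1 - ((p : ℚ)^2)⁻¹) := by
  classical
  set f : ArithmeticFunction ℚ := ⟨fun d => ((d : ℚ)^2)⁻¹, by simp⟩ with hfdef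
  have hfapp : ∀ d, f d = ((d : ℚ)^2)⁻¹ := fun d => rfl
  have hf : f.IsMultiplicative := by
    constructor
    · simp [hfapp]
    · intro m n _
      simp only [hfapp]
      push_cast
      rw [mul_pow, mul_inv]
  have hprimes : ∀ p ∈ v.primeFactors, p.Prime := fun p hp => Nat.prime_of_mem_primeFactors hp
  set R := ∏ p ∈ v.primeFactors, p with hR
  have hsq : Squarefree R := squarefree_prod_primes hprimes
  have hpf : R.primeFactors = v.primeFactors := Nat.primeFactors_prod hprimes
  have hmain := hf.prodPrimeFactors_one_sub_of_squarefree f hsq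
  rw [hpf] at hmain
  have hsub : R.divisors ⊆ v.divisors :=
    Nat.divisors_subset_of_dvd hv (Nat.prod_primeFactors_dvd v)
  have hext : ∑ d ∈ v.divisors, ((moebius d : ℤ) : ℚ) * f d
      = ∑ d ∈ R.divisors, ((moebius d : ℤ) : ℚ) * f d := by
    symm
    apply Finset.sum_subset hsub
    intro d hdv hdR
    have hsc : ¬ Squarefree d := by
      intro hsd
      apply hdR
      rw [Nat.mem_divisors]
      refine ⟨?_, hsq.ne_zero⟩
      calc d = ∏ p ∈ d.primeFactors, p := (Nat.prod_primeFactors_of_squarefree hsd).symm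
        _ ∣ R := Finset.prod_dvd_prod_of_subset _ _ _
          (Nat.primeFactors_mono (Nat.mem_divisors.mp hdv).1 hv)
    rw [moebius_eq_zero_of_not_squarefree hsc]
    simp
  have hstep : ∀ d ∈ v.divisors, ((moebius d : ℤ) : ℚ) * ((v / d : ℕ) : ℚ)^2
      = (v : ℚ)^2 * (((moebius d : ℤ) : ℚ) * f d) := by
    intro d hd
    obtain ⟨hdv, -⟩ := Nat.mem_divisors.mp hd
    have hd0 : (d : ℚ) ≠ 0 := Nat.cast_ne_zero.mpr (Nat.pos_of_mem_divisors hd).ne'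
    rw [Nat.cast_div hdv hd0, div_pow, hfapp]
    field_simp
  rw [Finset.sum_congr rfl hstep, ← Finset.mul_sum, hext, ← hmain]
  simp only [hfapp]

lemma closure_diff_eq (a b : ZMod v) :
    AddSubgroup.closure ((({0,a,b} : Finset (ZMod v)) - {0,a,b} : Finset (ZMod v)) : Set (ZMod v))
      = AddSubgroup.closure {a, b} := by
  rw [diff_set_eq]
  apply le_antisymm
  · rw [AddSubgroup.closure_le]
    intro x hx
    simp only [Finset.coe_insert, Finset.coe_singleton, Set.mem_insert_iff,
      Set.mem_singleton_iff] at hx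
    have ha : a ∈ AddSubgroup.closure ({a, b} : Set (ZMod v)) :=
      AddSubgroup.subset_closure (by simp)
    have hb : b ∈ AddSubgroup.closure ({a, b} : Set (ZMod v)) :=
      AddSubgroup.subset_closure (by simp)
    rcases hx with rfl|rfl|rfl|rfl|rfl|rfl|rfl
    · exact zero_mem _
    · exact ha
    · exact neg_mem ha
    · exact hb
    · exact neg_mem hb
    · exact sub_mem ha hb
    · exact sub_mem hb ha
  · rw [AddSubgroup.closure_le]
    intro x hx
    rcases hx with rfl | hx
    · exact AddSubgroup.subset_closure (by simp)
    · rw [Set.mem_singleton_iff] at hx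
      subst hx
      exact AddSubgroup.subset_closure (by simp)

-- Pair (a,b) is good iff the set {0,a,b} is good
lemma pair_good_iff [NeZero v] (hv4 : 4 < v) (hodd : Odd v) (a b : ZMod v)
    (ha : a ≠ 0) (hb : b ≠ 0) (hab : a ≠ b) :
    (({0,a,b} : Finset (ZMod v)) ∈ Bcon3 v) ↔
      (Nat.gcd (Nat.gcd a.val b.val) v = 1 ∧ b ≠ -a ∧ b ≠ 2*a ∧ a ≠ 2*b) := by
  have hcard : ({0,a,b} : Finset (ZMod v)).card = 3 := by
    rw [Finset.card_insert_of_notMem (by simp [ha.symm, hb.symm]),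
      Finset.card_insert_of_notMem (by simp [hab]), Finset.card_singleton]
  unfold Bcon3
  simp only [Set.mem_setOf_eq, hcard, true_and]
  rw [card7_iff hodd a b ha hb hab, closure_diff_eq, closure_pair_top_iff]
  tauto

end Helpers

set_option maxHeartbeats 2000000 in
/-- for odd `v > 4`, the number of `X ∈ B_con(v,3)` with `0 ∈ X`
equals `φ(v)(Φ(v) - 6)/2`, where `Φ(v) = v·∏_{p ∣ v} (1 + 1/p)`. -/
theorem card_base_lines_through_zero_odd
    (v : ℕ) (hv : 4 < v) (hodd : Odd v) :
    (Nat.card {X : Finset (ZMod v) // X ∈ Bcon3 v ∧ (0 : ZMod v) ∈ X} : ℚ) =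
      (Nat.totient v : ℚ) *
        ((v : ℚ) * (∏ p ∈ v.primeFactors, (1 + 1 / (p : ℚ))) - 6) / 2 := by
  classical
  haveI : NeZero v := ⟨by omega⟩
  have hv0 : v ≠ 0 := by omega
  set cp : ZMod v × ZMod v → Prop := fun p => Nat.gcd (Nat.gcd p.1.val p.2.val) v = 1 with hcp
  set P : ZMod v × ZMod v → Prop := fun p =>
    cp p ∧ p.1 ≠ 0 ∧ p.2 ≠ 0 ∧ p.1 ≠ p.2 ∧ p.2 ≠ -p.1 ∧ p.2 ≠ 2*p.1 ∧ p.1 ≠ 2*p.2 with hP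
  set N := Finset.univ.filter (fun X : Finset (ZMod v) => X ∈ Bcon3 v ∧ (0:ZMod v) ∈ X) with hN
  set SP := Finset.univ.filter P with hSP
  set T := Finset.univ.filter cp with hT
  -- Step 0 : Nat.card = N.card
  have hNat : (Nat.card {X : Finset (ZMod v) // X ∈ Bcon3 v ∧ (0 : ZMod v) ∈ X}) = N.card := by
    rw [Nat.card_eq_fintype_card, hN]
    exact Fintype.card_subtype _
  -- Step 1 : SP.card = 2 * N.card
  have himg : ∀ p ∈ SP, ({0, p.1, p.2} : Finset (ZMod v)) ∈ N := by
    intro p hp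
    simp only [hSP, Finset.mem_filter, Finset.mem_univ, true_and, hP] at hp
    obtain ⟨hg, h1, h2, h3, h4, h5, h6⟩ := hp
    simp only [hN, Finset.mem_filter, Finset.mem_univ, true_and]
    exact ⟨(pair_good_iff hv hodd _ _ h1 h2 h3).mpr ⟨hg, h4, h5, h6⟩, by simp⟩
  have claim1 : SP.card = 2 * N.card := by
    rw [Finset.card_eq_sum_card_fiberwise himg,
      Finset.sum_congr rfl (fun X hX => ?fiber), Finset.sum_const, smul_eq_mul, mul_comm]
    case fiber =>
      simp only [hN, Finset.mem_filter, Finset.mem_univ, true_and] at hX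
      obtain ⟨hBc, h0X⟩ := hX
      obtain ⟨hc3, hc7, hcl⟩ := hBc
      have hcard2 : (X.erase 0).card = 2 := by rw [Finset.card_erase_of_mem h0X, hc3]
      obtain ⟨a, b, hab, hXe⟩ := Finset.card_eq_two.mp hcard2
      have haX : a ∈ X.erase 0 := hXe ▸ by simp
      have hbX : b ∈ X.erase 0 := hXe ▸ by simp
      have ha : a ≠ 0 := (Finset.mem_erase.mp haX).1
      have hb : b ≠ 0 := (Finset.mem_erase.mp hbX).1
      have hX0 : X = {0, a, b} := by rw [← Finset.insert_erase h0X, hXe]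
      have hgood : Nat.gcd (Nat.gcd a.val b.val) v = 1 ∧ b ≠ -a ∧ b ≠ 2*a ∧ a ≠ 2*b :=
        (pair_good_iff hv hodd a b ha hb hab).mp (hX0 ▸ ⟨hc3, hc7, hcl⟩)
      obtain ⟨hg, h4, h5, h6⟩ := hgood
      have hPab : P (a, b) := ⟨hg, ha, hb, hab, h4, h5, h6⟩
      have hPba : P (b, a) := by
        refine ⟨?_, hb, ha, Ne.symm hab, ?_, h6, h5⟩
        · show Nat.gcd (Nat.gcd b.val a.val) v = 1
          rwa [Nat.gcd_comm b.val a.val]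
        · intro h; exact h4 (by linear_combination h)
      have hfib : SP.filter (fun p => ({0, p.1, p.2} : Finset (ZMod v)) = X)
          = {(a, b), (b, a)} := by
        ext p
        simp only [Finset.mem_filter, hSP, Finset.mem_univ, true_and,
          Finset.mem_insert, Finset.mem_singleton]
        constructor
        · rintro ⟨hp, hpX⟩
          obtain ⟨-, hp1, hp2, hp12, -⟩ := hp
          have h1X : p.1 ∈ X := by rw [← hpX]; simp
          have h2X : p.2 ∈ X := by rw [← hpX]; simp
          rw [hX0] at h1X h2X
          simp only [Finset.mem_insert, Finset.mem_singleton] at h1X h2X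
          rcases h1X with h1|h1|h1
          · exact absurd h1 hp1
          · rcases h2X with h2|h2|h2
            · exact absurd h2 hp2
            · exact absurd (h1.trans h2.symm) hp12
            · left; exact Prod.ext h1 h2
          · rcases h2X with h2|h2|h2
            · exact absurd h2 hp2
            · right; exact Prod.ext h1 h2
            · exact absurd (h1.trans h2.symm) hp12
        · rintro (rfl|rfl)
          · exact ⟨hPab, hX0.symm⟩
          · refine ⟨hPba, ?_⟩
            rw [hX0]
            ext x; simp; tauto
      rw [hfib, Finset.card_insert_of_notMem, Finset.card_singleton]
      simp only [Finset.mem_singleton, Prod.ext_iff]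
      exact fun h => hab h.1
  -- helper facts
  have hcancel2 : ∀ x : ZMod v, 2 * x = 0 → x = 0 := by
    intro x h
    exact ((two_unit hodd).mul_right_eq_zero).mp h
  have hzero : ∀ x y : ZMod v, x = 0 → y = 0 → ¬ cp (x, y) := by
    intro x y hx hy h
    rw [hcp] at h
    simp only [hx, hy, ZMod.val_zero, Nat.gcd_zero_left, Nat.gcd_self] at h
    omega
  -- Step 2 : card of each degenerate class is φ(v)
  have hDcard : ∀ (c : ZMod v × ZMod v → Prop) (_ : DecidablePred c)
      (e : ZMod v → ZMod v × ZMod v) (r : ZMod v × ZMod v → ZMod v),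
      (∀ x, r (e x) = x) →
      (∀ p, c p → e (r p) = p) →
      (∀ x, cp (e x) ↔ Nat.gcd x.val v = 1) →
      (∀ x, c (e x)) →
      (T.filter c).card = Nat.totient v := by
    intro c hdec e r hre her hiff hce
    rw [← card_coprime_filter (v := v)]
    apply Finset.card_bij' (fun p _ => r p) (fun x _ => e x)
    · intro p hp
      simp only [Finset.mem_filter, Finset.mem_univ, true_and, hT] at hp ⊢
      obtain ⟨hcpp, hcc⟩ := hp
      rw [← hiff (r p), her p hcc]
      exact hcpp
    · intro x hx
      simp only [Finset.mem_filter, Finset.mem_univ, true_and, hT] at hx ⊢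
      exact ⟨(hiff x).mpr hx, hce x⟩
    · intro p hp
      simp only [Finset.mem_filter, hT] at hp
      exact her p hp.2
    · intro x _
      exact hre x
  have hmem1 : ∀ x : ZMod v, x ∈ AddSubgroup.closure ({x} : Set (ZMod v)) :=
    fun x => AddSubgroup.subset_closure rfl
  have hD1 : (T.filter (fun p => p.1 = 0)).card = Nat.totient v := by
    apply hDcard _ _ (fun x => (0, x)) (fun p => p.2) (fun x => rfl)
    · intro p hp; exact Prod.ext hp.symm rfl
    · intro x; simp only [hcp]; simp [ZMod.val_zero]
    · intro x; rfl
  have hD2 : (T.filter (fun p => p.2 = 0)).card = Nat.totient v := by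
    apply hDcard _ _ (fun x => (x, 0)) (fun p => p.1) (fun x => rfl)
    · intro p hp; exact Prod.ext rfl hp.symm
    · intro x; simp only [hcp]; simp [ZMod.val_zero]
    · intro x; rfl
  have hD3 : (T.filter (fun p => p.1 = p.2)).card = Nat.totient v := by
    apply hDcard _ _ (fun x => (x, x)) (fun p => p.1) (fun x => rfl)
    · intro p hp; exact Prod.ext rfl hp
    · intro x; simp only [hcp]; simp [Nat.gcd_self]
    · intro x; rfl
  have hD4 : (T.filter (fun p => p.2 = -p.1)).card = Nat.totient v := by
    apply hDcard _ _ (fun x => (x, -x)) (fun p => p.1) (fun x => rfl)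
    · intro p hp; exact Prod.ext rfl (by rw [hp])
    · intro x; simp only [hcp]; exact gcd_cond_collapse x (-x) (neg_mem (hmem1 x))
    · intro x; rfl
  have hD5 : (T.filter (fun p => p.2 = 2*p.1)).card = Nat.totient v := by
    apply hDcard _ _ (fun x => (x, 2*x)) (fun p => p.1) (fun x => rfl)
    · intro p hp; exact Prod.ext rfl (by rw [hp])
    · intro x; simp only [hcp]
      exact gcd_cond_collapse x (2*x) (by rw [two_mul]; exact add_mem (hmem1 x) (hmem1 x))
    · intro x; rfl
  have hD6 : (T.filter (fun p => p.1 = 2*p.2)).card = Nat.totient v := by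
    apply hDcard _ _ (fun x => (2*x, x)) (fun p => p.2) (fun x => rfl)
    · intro p hp; exact Prod.ext (by rw [hp]) rfl
    · intro x; simp only [hcp]
      rw [Nat.gcd_comm (2*x).val x.val]
      exact gcd_cond_collapse x (2*x) (by rw [two_mul]; exact add_mem (hmem1 x) (hmem1 x))
    · intro x; rfl
  -- disjointness of the six classes
  have hmemT : ∀ (c : ZMod v × ZMod v → Prop) (_ : DecidablePred c) (p : ZMod v × ZMod v),
      p ∈ T.filter c ↔ cp p ∧ c p := by
    intro c _ p
    simp [hT, Finset.mem_filter]
  have h3zero : ∀ x y : ZMod v, 3*x = 0 → 3*y = 0 → ¬ cp (x, y) := by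
    intro x y h1 h2 h
    exact not_cop_of_three hv x y h1 h2 h
  -- the big union
  have hsplit : SP = T.filter (fun p =>
      ¬(p.1 = 0 ∨ p.2 = 0 ∨ p.1 = p.2 ∨ p.2 = -p.1 ∨ p.2 = 2*p.1 ∨ p.1 = 2*p.2)) := by
    ext p
    simp only [hSP, hP, hT, Finset.mem_filter, Finset.mem_univ, true_and, not_or]
  have hTsplit : T.card = SP.card +
      (T.filter (fun p => p.1 = 0 ∨ p.2 = 0 ∨ p.1 = p.2 ∨ p.2 = -p.1 ∨ p.2 = 2*p.1 ∨ p.1 = 2*p.2)).card := by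
    rw [hsplit, add_comm]
    exact (Finset.card_filter_add_card_filter_not _).symm
  have hUnion : T.filter (fun p => p.1 = 0 ∨ p.2 = 0 ∨ p.1 = p.2 ∨ p.2 = -p.1 ∨ p.2 = 2*p.1 ∨ p.1 = 2*p.2)
      = T.filter (fun p => p.1 = 0) ∪ (T.filter (fun p => p.2 = 0) ∪ (T.filter (fun p => p.1 = p.2)
        ∪ (T.filter (fun p => p.2 = -p.1) ∪ (T.filter (fun p => p.2 = 2*p.1) ∪ T.filter (fun p => p.1 = 2*p.2))))) := by
    rw [Finset.filter_or, Finset.filter_or, Finset.filter_or, Finset.filter_or, Finset.filter_or]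
  -- pairwise disjointness
  have hdisj : ∀ (c c' : ZMod v × ZMod v → Prop) (_ : DecidablePred c) (_ : DecidablePred c'),
      (∀ p : ZMod v × ZMod v, cp p → c p → c' p → False) →
      Disjoint (T.filter c) (T.filter c') := by
    intro c c' _ _ h
    rw [Finset.disjoint_left]
    intro p hp hp'
    simp only [hT, Finset.mem_filter, Finset.mem_univ, true_and] at hp hp'
    exact h p hp.1 hp.2 hp'.2
  have d12 : ∀ p : ZMod v × ZMod v, cp p → p.1 = 0 → p.2 = 0 → False :=
    fun p hc h1 h2 => hzero p.1 p.2 h1 h2 (by rwa [← Prod.mk.eta (p := p)] at hc)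
  -- individual contradiction facts
  have k12 : ∀ p : ZMod v × ZMod v, cp p → p.1 = 0 → p.2 = 0 → False := by
    intro p hc h1 h2; exact hzero p.1 p.2 h1 h2 (by simpa using hc)
  have k13 : ∀ p : ZMod v × ZMod v, cp p → p.1 = 0 → p.1 = p.2 → False := by
    intro p hc h1 h2; exact k12 p hc h1 (h2 ▸ h1)
  have k14 : ∀ p : ZMod v × ZMod v, cp p → p.1 = 0 → p.2 = -p.1 → False := by
    intro p hc h1 h2; exact k12 p hc h1 (by rw [h2, h1, neg_zero])
  have k15 : ∀ p : ZMod v × ZMod v, cp p → p.1 = 0 → p.2 = 2*p.1 → False := by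
    intro p hc h1 h2; exact k12 p hc h1 (by rw [h2, h1, mul_zero])
  have k16 : ∀ p : ZMod v × ZMod v, cp p → p.1 = 0 → p.1 = 2*p.2 → False := by
    intro p hc h1 h2; exact k12 p hc h1 (hcancel2 p.2 (by rw [← h2, h1]))
  have k23 : ∀ p : ZMod v × ZMod v, cp p → p.2 = 0 → p.1 = p.2 → False := by
    intro p hc h1 h2; exact k12 p hc (h2.trans h1) h1
  have k24 : ∀ p : ZMod v × ZMod v, cp p → p.2 = 0 → p.2 = -p.1 → False := by
    intro p hc h1 h2
    exact k12 p hc (by have := h1 ▸ h2; exact neg_eq_zero.mp this.symm) h1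
  have k25 : ∀ p : ZMod v × ZMod v, cp p → p.2 = 0 → p.2 = 2*p.1 → False := by
    intro p hc h1 h2; exact k12 p hc (hcancel2 p.1 (by rw [← h2, h1])) h1
  have k26 : ∀ p : ZMod v × ZMod v, cp p → p.2 = 0 → p.1 = 2*p.2 → False := by
    intro p hc h1 h2; exact k12 p hc (by rw [h2, h1, mul_zero]) h1
  have k34 : ∀ p : ZMod v × ZMod v, cp p → p.1 = p.2 → p.2 = -p.1 → False := by
    intro p hc h1 h2
    have hp1 : p.1 = 0 := hcancel2 p.1 (by linear_combination h1 + h2)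
    exact k13 p hc hp1 h1
  have k35 : ∀ p : ZMod v × ZMod v, cp p → p.1 = p.2 → p.2 = 2*p.1 → False := by
    intro p hc h1 h2
    have hp1 : p.1 = 0 := by linear_combination -h1 - h2
    exact k13 p hc hp1 h1
  have k36 : ∀ p : ZMod v × ZMod v, cp p → p.1 = p.2 → p.1 = 2*p.2 → False := by
    intro p hc h1 h2
    have hp2 : p.2 = 0 := by linear_combination h1 - h2
    exact k23 p hc hp2 h1
  have k45 : ∀ p : ZMod v × ZMod v, cp p → p.2 = -p.1 → p.2 = 2*p.1 → False := by
    intro p hc h1 h2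
    have h3a : 3*p.1 = 0 := by linear_combination h1 - h2
    have h3b : 3*p.2 = 0 := by linear_combination 3*h1 - h3a
    exact h3zero p.1 p.2 h3a h3b (by simpa using hc)
  have k46 : ∀ p : ZMod v × ZMod v, cp p → p.2 = -p.1 → p.1 = 2*p.2 → False := by
    intro p hc h1 h2
    have h3a : 3*p.1 = 0 := by linear_combination h2 + 2*h1
    have h3b : 3*p.2 = 0 := by linear_combination 3*h1 - h3a
    exact h3zero p.1 p.2 h3a h3b (by simpa using hc)
  have k56 : ∀ p : ZMod v × ZMod v, cp p → p.2 = 2*p.1 → p.1 = 2*p.2 → False := by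
    intro p hc h1 h2
    have h3a : 3*p.1 = 0 := by linear_combination -2*h1 - h2
    have h3b : 3*p.2 = 0 := by linear_combination -h1 - 2*h2
    exact h3zero p.1 p.2 h3a h3b (by simpa using hc)
  -- cardinality of the union
  have hUcard : (T.filter (fun p => p.1 = 0) ∪ (T.filter (fun p => p.2 = 0) ∪ (T.filter (fun p => p.1 = p.2)
        ∪ (T.filter (fun p => p.2 = -p.1) ∪ (T.filter (fun p => p.2 = 2*p.1) ∪ T.filter (fun p => p.1 = 2*p.2)))))).card
      = 6 * Nat.totient v := by
    rw [Finset.card_union_of_disjoint, Finset.card_union_of_disjoint,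
      Finset.card_union_of_disjoint, Finset.card_union_of_disjoint,
      Finset.card_union_of_disjoint, hD1, hD2, hD3, hD4, hD5, hD6]
    · ring
    · exact hdisj _ _ _ _ k56
    · rw [Finset.disjoint_union_right]
      exact ⟨hdisj _ _ _ _ k45, hdisj _ _ _ _ k46⟩
    · rw [Finset.disjoint_union_right, Finset.disjoint_union_right]
      exact ⟨hdisj _ _ _ _ k34, hdisj _ _ _ _ k35, hdisj _ _ _ _ k36⟩
    · rw [Finset.disjoint_union_right, Finset.disjoint_union_right, Finset.disjoint_union_right]
      exact ⟨hdisj _ _ _ _ k23, hdisj _ _ _ _ k24, hdisj _ _ _ _ k25, hdisj _ _ _ _ k26⟩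
    · rw [Finset.disjoint_union_right, Finset.disjoint_union_right, Finset.disjoint_union_right,
        Finset.disjoint_union_right]
      exact ⟨hdisj _ _ _ _ k12, hdisj _ _ _ _ k13, hdisj _ _ _ _ k14, hdisj _ _ _ _ k15,
        hdisj _ _ _ _ k16⟩
  have claim2 : T.card = SP.card + 6 * Nat.totient v := by
    rw [hTsplit, hUnion, hUcard]
  -- rational value of T.card
  have hTQ : (T.card : ℚ) = (Nat.totient v : ℚ) *
      ((v : ℚ) * ∏ p ∈ v.primeFactors, (1 + 1 / (p : ℚ))) := by
    have h1 : (T.card : ℤ) = ∑ d ∈ v.divisors, (ArithmeticFunction.moebius d) * ((v / d : ℕ) : ℤ)^2 := by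
      exact card_T
    have h2 : (T.card : ℚ) = ∑ d ∈ v.divisors, ((moebius d : ℤ) : ℚ) * ((v / d : ℕ) : ℚ)^2 := by
      have h2' := congrArg (fun z : ℤ => (z : ℚ)) h1
      push_cast at h2'
      exact h2'
    rw [sum_moebius_eq_prod hv0] at h2
    have h3 : ∏ p ∈ v.primeFactors, (1 - ((p:ℚ)^2)⁻¹)
        = (∏ p ∈ v.primeFactors, (1 - (p:ℚ)⁻¹)) * ∏ p ∈ v.primeFactors, (1 + 1/(p:ℚ)) := by
      rw [← Finset.prod_mul_distrib]
      apply Finset.prod_congr rfl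
      intro p hp
      have hp0 : (p:ℚ) ≠ 0 := Nat.cast_ne_zero.mpr (Nat.prime_of_mem_primeFactors hp).pos.ne'
      field_simp
      ring
    rw [h2, h3, Nat.totient_eq_mul_prod_factors]
    ring
  -- final arithmetic
  rw [hNat]
  have hcast : (T.card : ℚ) = 2 * (N.card : ℚ) + 6 * (Nat.totient v : ℚ) := by
    exact_mod_cast congrArg (fun n : ℕ => (n : ℚ)) (claim2.trans (by rw [claim1]))
  rw [hTQ] at hcast
  linear_combination (-1/2 : ℚ) * hcast
end

section
/- Let v > 4 and let l ∈ Z_v* have multiplicative order greater than 3. Then there is no X ∈ B_con(v,3) with 0 ∈ X such that lX = X − x for some x ∈ X; that is, N(v,3,l) = 0. -/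
open scoped Pointwise

/-- `N(v,3,l)`: the number of `X ∈ B_con(v,3)` with `0 ∈ X` such that
`lX = X - x` for some `x ∈ X`. -/
noncomputable def Nparam3 (v : ℕ) (l : (ZMod v)ˣ) : ℕ :=
  Nat.card {X : Finset (ZMod v) // X ∈ Bcon3 v ∧ (0 : ZMod v) ∈ X ∧
    ∃ x ∈ X, X.image (fun y => (l : ZMod v) * y) = X.image (fun y => y - x)}

lemma main_aux (v : ℕ) (l : (ZMod v)ˣ) (hord : 3 < orderOf l)
    (X : Finset (ZMod v)) (hX : X ∈ Bcon3 v) (x : ZMod v) (hx : x ∈ X)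
    (himg : X.image (fun y => (l : ZMod v) * y) = X.image (fun y => y - x)) :
    False := by
  obtain ⟨hcard, hdcard, hclos⟩ := hX
  set f : ZMod v → ZMod v := fun y => (l : ZMod v) * y + x with hf
  have hmaps : ∀ y ∈ X, f y ∈ X := by
    intro y hy
    have h1 : (l : ZMod v) * y ∈ X.image (fun y => y - x) := by
      rw [← himg]; exact Finset.mem_image_of_mem _ hy
    obtain ⟨z, hz, hz2⟩ := Finset.mem_image.mp h1
    have : f y = z := by simp only [hf]; rw [← hz2]; ring
    rwa [this]
  have hinj : Function.Injective f := by
    intro y y' h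
    simp only [hf] at h
    have h2 : (l : ZMod v) * y = (l : ZMod v) * y' := by linear_combination h
    exact (Units.mul_right_inj l).mp h2
  have hiter : ∀ (m : ℕ) (y y' : ZMod v),
      f^[m] y - f^[m] y' = (l : ZMod v)^m * (y - y') := by
    intro m
    induction m with
    | zero => intro y y'; simp
    | succ n ih =>
      intro y y'
      rw [Function.iterate_succ_apply', Function.iterate_succ_apply']
      have : f (f^[n] y) - f (f^[n] y') = (l : ZMod v) * (f^[n] y - f^[n] y') := by
        simp only [hf]; ring
      rw [this, ih, pow_succ]; ring
  -- key: if f^[m] fixes X pointwise with 0 < m ≤ 3, contradiction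
  have key : ∀ m : ℕ, 0 < m → m ≤ 3 → (∀ y ∈ X, f^[m] y = y) → False := by
    intro m hm1 hm3 hfix
    have hDfix : ∀ z ∈ ((X - X : Finset (ZMod v)) : Set (ZMod v)),
        (l : ZMod v)^m * z = z := by
      intro z hz
      rw [Finset.mem_coe, Finset.mem_sub] at hz
      obtain ⟨y, hy, y', hy', rfl⟩ := hz
      rw [← hiter m y y', hfix y hy, hfix y' hy']
    have hone : (l : ZMod v)^m * 1 = 1 := by
      have hmem : (1 : ZMod v) ∈ AddSubgroup.closure
          ((X - X : Finset (ZMod v)) : Set (ZMod v)) := by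
        rw [hclos]; trivial
      refine AddSubgroup.closure_induction ?_ ?_ ?_ ?_ hmem
      · exact hDfix
      · simp
      · intro a b _ _ ha hb
        rw [mul_add, ha, hb]
      · intro a _ ha
        rw [mul_neg, ha]
    have hpow : l ^ m = 1 := by
      ext
      push_cast
      simpa using hone
    have hdvd := orderOf_dvd_of_pow_eq_one hpow
    have := Nat.le_of_dvd hm1 hdvd
    omega
  obtain ⟨a, b, c, hab, hac, hbc, hXeq⟩ := Finset.card_eq_three.mp hcard
  have ha : a ∈ X := by rw [hXeq]; simp
  have hb : b ∈ X := by rw [hXeq]; simp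
  have hc : c ∈ X := by rw [hXeq]; simp
  have hfa : f a = a ∨ f a = b ∨ f a = c := by
    have := hmaps a ha; rw [hXeq] at this
    simpa using this
  have hfb : f b = a ∨ f b = b ∨ f b = c := by
    have := hmaps b hb; rw [hXeq] at this
    simpa using this
  have hfc : f c = a ∨ f c = b ∨ f c = c := by
    have := hmaps c hc; rw [hXeq] at this
    simpa using this
  have hmemiff : ∀ y ∈ X, y = a ∨ y = b ∨ y = c := by
    intro y hy; rw [hXeq] at hy; simpa using hy
  rcases hfa with h1 | h1 | h1 <;> rcases hfb with h2 | h2 | h2 <;>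
    rcases hfc with h3 | h3 | h3
  all_goals try exact hab (hinj (h1.trans h2.symm))
  all_goals try exact hac (hinj (h1.trans h3.symm))
  all_goals try exact hbc (hinj (h2.trans h3.symm))
  · refine key 1 (by norm_num) (by norm_num) (fun y hy => ?_)
    rcases hmemiff y hy with rfl | rfl | rfl <;>
      · show f _ = _
        simp only [h1, h2, h3]
  · refine key 2 (by norm_num) (by norm_num) (fun y hy => ?_)
    rcases hmemiff y hy with rfl | rfl | rfl <;>
      · show f (f _) = _
        simp only [h1, h2, h3]
  · refine key 2 (by norm_num) (by norm_num) (fun y hy => ?_)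
    rcases hmemiff y hy with rfl | rfl | rfl <;>
      · show f (f _) = _
        simp only [h1, h2, h3]
  · refine key 3 (by norm_num) (by norm_num) (fun y hy => ?_)
    rcases hmemiff y hy with rfl | rfl | rfl <;>
      · show f (f (f _)) = _
        simp only [h1, h2, h3]
  · refine key 3 (by norm_num) (by norm_num) (fun y hy => ?_)
    rcases hmemiff y hy with rfl | rfl | rfl <;>
      · show f (f (f _)) = _
        simp only [h1, h2, h3]
  · refine key 2 (by norm_num) (by norm_num) (fun y hy => ?_)
    rcases hmemiff y hy with rfl | rfl | rfl <;>
      · show f (f _) = _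
        simp only [h1, h2, h3]

/-- if the multiplicative order of `l ∈ Z_v*` exceeds 3, then
`N(v,3,l) = 0`. -/
theorem Nparam3_eq_zero_of_three_lt_order
    (v : ℕ) (hv : 4 < v) (l : (ZMod v)ˣ) (hord : 3 < orderOf l) :
    Nparam3 v l = 0 := by
  have hempty : IsEmpty {X : Finset (ZMod v) // X ∈ Bcon3 v ∧ (0 : ZMod v) ∈ X ∧
      ∃ x ∈ X, X.image (fun y => (l : ZMod v) * y) = X.image (fun y => y - x)} := by
    constructor
    rintro ⟨X, hX, _, x, hx, himg⟩
    exact main_aux v l hord X hX x hx himg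
  unfold Nparam3
  exact Nat.card_of_isEmpty
end

section
/- Let v > 4 and let l ∈ Z_v* have multiplicative order exactly 2. If l + 1 ≡ 0 (mod v), or if v ≡ 0 (mod 4) and l ≡ 1 (mod v/2), then N(v,3,l) = 0; otherwise N(v,3,l) = 3φ(v)/2, where φ is Euler's totient function. -/
open scoped Pointwise

/-!
Write `X = {0, a, b}` and use `l² = 1`. According as `x = 0`, `a` or `b`, the equation
`lX = X - x` forces `l` to fix or swap `a` and `b`, or `a = (1 - l) b`, or `b = (1 - l) a`,
except for assignments that force `a + b = 0`, which `|X - X| = 7` excludes. Since `a` and `b`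
generate `Z_v`, `l` cannot fix both, and the generator of `X - X` is a unit `u`; so `X` is
`{0, u, lu}` or `{0, (1 - l) u, u}`. Scaling by `u⁻¹`, `|X - X| = 7` holds for these exactly when
`l + 1 ≠ 0` and `2 (1 - l) ≠ 0`, and the latter is the congruence condition on `l`. In the
remaining case every set `{0, u, lu}` arises from exactly two units (`u` and `lu`), every set
`{0, (1 - l) u, u}` from one, and the two families are disjoint because `1 - l` is a zero
divisor; hence `N = φ(v) / 2 + φ(v)`.
-/

section AddCommGroup

variable {G : Type*} [AddCommGroup G]

theorem AddSubgroup.closure_sub_self_of_zero_mem {s : Set G} (hs : (0 : G) ∈ s) :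
    AddSubgroup.closure (s - s) = AddSubgroup.closure s := by
  refine le_antisymm (AddSubgroup.closure_le _ |>.2 ?_) (AddSubgroup.closure_mono ?_)
  · rintro _ ⟨x, hx, y, hy, rfl⟩
    exact sub_mem (AddSubgroup.subset_closure hx) (AddSubgroup.subset_closure hy)
  · exact fun x hx => ⟨x, hx, 0, hs, sub_zero x⟩

variable [DecidableEq G]

theorem Finset.exists_eq_insert_zero_pair {s : Finset G} (hs : s.card = 3) (h0 : (0 : G) ∈ s) :
    ∃ a b : G, a ≠ 0 ∧ b ≠ 0 ∧ a ≠ b ∧ s = {0, a, b} := by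
  obtain ⟨a, b, hab, he⟩ := Finset.card_eq_two.1 (by rw [Finset.card_erase_of_mem h0, hs])
  have ha : a ∈ s.erase 0 := by simp [he]
  have hb : b ∈ s.erase 0 := by simp [he]
  refine ⟨a, b, Finset.ne_of_mem_erase ha, Finset.ne_of_mem_erase hb, hab, ?_⟩
  rw [← he, Finset.insert_erase h0]

theorem Finset.insert_zero_pair_eq_iff {p q r s : G} (hp : p ≠ 0) (hq : q ≠ 0) (hr : r ≠ 0)
    (hs : s ≠ 0) :
    ({0, p, q} : Finset G) = {0, r, s} ↔ p = r ∧ q = s ∨ p = s ∧ q = r := by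
  rw [← Set.pair_eq_pair_iff, ← Finset.coe_pair, ← Finset.coe_pair, Finset.coe_inj]
  refine ⟨fun h => ?_, fun h => by rw [h]⟩
  have h' := congrArg (·.erase 0) h
  rwa [Finset.erase_insert (by simp [hp.symm, hq.symm]),
    Finset.erase_insert (by simp [hr.symm, hs.symm])] at h'

theorem Finset.insert_zero_pair_sub_self (a b : G) :
    ({0, a, b} : Finset G) - {0, a, b} = {0, a, b, -a, -b, a - b, b - a} := by
  ext z
  simp only [Finset.mem_sub, Finset.mem_insert, Finset.mem_singleton]
  constructor
  · rintro ⟨c, (rfl | rfl | rfl), d, (rfl | rfl | rfl), rfl⟩ <;> simp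
  · rintro (rfl | rfl | rfl | rfl | rfl | rfl | rfl) <;> simp

theorem closure_insert_zero_pair_sub_self (a b : G) :
    AddSubgroup.closure ((({0, a, b} : Finset G) - {0, a, b} : Finset G) : Set G) =
      AddSubgroup.closure {a, b} := by
  rw [Finset.coe_sub, AddSubgroup.closure_sub_self_of_zero_mem (by simp)]
  simp [AddSubgroup.closure_insert_zero]

end AddCommGroup

theorem eq_one_of_forall_mul_eq_self_of_closure_eq_top {R : Type*} [Ring R] {s : Set R} {l : R}
    (hs : AddSubgroup.closure s = ⊤) (h : ∀ x ∈ s, l * x = x) : l = 1 := by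
  have hEq := AddMonoidHom.eqOn_closure (f := AddMonoidHom.mulLeft l) (g := AddMonoidHom.id R) h
  rw [hs] at hEq
  simpa using hEq (AddSubgroup.mem_top 1)

section CommRing

variable {R : Type*} [CommRing R]

def DiffsDistinct (a b : R) : Prop :=
  a ≠ 0 ∧ b ≠ 0 ∧ a - b ≠ 0 ∧ a + b ≠ 0 ∧ a - 2 * b ≠ 0 ∧ b - 2 * a ≠ 0 ∧
    2 * a ≠ 0 ∧ 2 * b ≠ 0 ∧ 2 * (a - b) ≠ 0

theorem DiffsDistinct.symm {a b : R} (h : DiffsDistinct a b) : DiffsDistinct b a := by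
  obtain ⟨h1, h2, h3, h4, h5, h6, h7, h8, h9⟩ := h
  exact ⟨h2, h1, fun h => h3 (by linear_combination -h), fun h => h4 (by linear_combination h),
    h6, h5, h8, h7, fun h => h9 (by linear_combination -h)⟩

theorem diffsDistinct_unit_mul_iff (u : Rˣ) {a b : R} :
    DiffsDistinct (u * a) (u * b) ↔ DiffsDistinct a b := by
  simp only [DiffsDistinct, ← mul_sub, ← mul_add, mul_left_comm (2 : R) (u : R), ne_eq,
    Units.mul_right_eq_zero]

theorem diffsDistinct_one_iff {l : R} (h2 : (2 : R) ≠ 0) (hl : l * l = 1) (hl1 : l ≠ 1) :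
    DiffsDistinct 1 l ↔ l + 1 ≠ 0 ∧ 2 * (1 - l) ≠ 0 := by
  refine ⟨fun h => ⟨by rw [add_comm]; exact h.2.2.2.1, h.2.2.2.2.2.2.2.2⟩, fun ⟨h1, h9⟩ => ?_⟩
  refine ⟨?_, ?_, ?_, ?_, ?_, ?_, ?_, ?_, ?_⟩ <;> intro h <;> grind

theorem diffsDistinct_one_sub_iff {l : R} (h2 : (2 : R) ≠ 0) (hl : l * l = 1) (hl1 : l ≠ 1) :
    DiffsDistinct (1 - l) 1 ↔ l + 1 ≠ 0 ∧ 2 * (1 - l) ≠ 0 := by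
  refine ⟨fun h => ⟨fun h' => h.2.2.2.2.1 (by linear_combination -h'), h.2.2.2.2.2.2.1⟩,
    fun ⟨h1, h9⟩ => ?_⟩
  refine ⟨?_, ?_, ?_, ?_, ?_, ?_, ?_, ?_, ?_⟩ <;> intro h <;> grind

theorem not_isUnit_one_sub {l : R} (hl : l * l = 1) (hl' : l + 1 ≠ 0) : ¬IsUnit (1 - l) :=
  fun hu => hl' (hu.mul_right_eq_zero.1 (by linear_combination -hl))

variable [DecidableEq R]

theorem card_insert_zero_pair_sub_self_eq_seven_iff (a b : R) :
    (({0, a, b} : Finset R) - {0, a, b}).card = 7 ↔ DiffsDistinct a b := by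
  have hnodup := Multiset.toFinset_card_eq_card_iff_nodup
    (m := (([0, a, b, -a, -b, a - b, b - a] : List R) : Multiset R))
  rw [Multiset.coe_card, Multiset.coe_nodup] at hnodup
  rw [Finset.insert_zero_pair_sub_self, show ({0, a, b, -a, -b, a - b, b - a} : Finset R) =
    [0, a, b, -a, -b, a - b, b - a].toFinset by simp]
  refine hnodup.trans ?_
  simp only [List.nodup_cons, List.mem_cons, List.not_mem_nil, or_false, not_or,
    List.nodup_nil, and_true, DiffsDistinct]
  constructor
  · intro h
    refine ⟨?_, ?_, ?_, ?_, ?_, ?_, ?_, ?_, ?_⟩ <;> intro h' <;> grind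
  · intro h
    refine ⟨⟨?_, ?_, ?_, ?_, ?_, ?_⟩, ⟨?_, ?_, ?_, ?_, ?_⟩, ⟨?_, ?_, ?_, ?_⟩, ⟨?_, ?_, ?_⟩,
      ⟨?_, ?_⟩, ?_, ?_⟩ <;> intro h' <;> grind

theorem image_mul_insert_zero_pair (l a b : R) :
    ({0, a, b} : Finset R).image (l * ·) = {0, l * a, l * b} := by
  simp [Finset.image_insert]

variable {l a b : R}

theorem eq_one_sub_mul_of_image_mul_eq_image_sub_left (hl : l * l = 1) (hD : DiffsDistinct a b)
    (h : ({0, a, b} : Finset R).image (l * ·) = ({0, a, b} : Finset R).image (· - a)) :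
    a = (1 - l) * b := by
  obtain ⟨ha, hb, hab, hab', -⟩ := hD
  have hu : IsUnit l := .of_mul_eq_one l hl
  rw [image_mul_insert_zero_pair, show ({0, a, b} : Finset R).image (· - a) = {0, -a, b - a} by
    simp [Finset.image_insert, Finset.insert_comm], Finset.insert_zero_pair_eq_iff
    (hu.mul_right_eq_zero.not.2 ha) (hu.mul_right_eq_zero.not.2 hb)
    (neg_ne_zero.2 ha) (by rwa [← neg_sub, neg_ne_zero])] at h
  rcases h with ⟨-, hlb⟩ | ⟨hla, hlb⟩
  · linear_combination hlb
  -- `a = l * (l * a) = l * b - l * a = -b`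
  · exact absurd (by linear_combination l * hla + hlb - hla - a * hl) hab'

theorem eq_mul_or_eq_one_sub_mul_of_image_mul_eq_image_sub (hl : l * l = 1)
    (hD : DiffsDistinct a b) {x : R} (hx : x ∈ ({0, a, b} : Finset R))
    (h : ({0, a, b} : Finset R).image (l * ·) = ({0, a, b} : Finset R).image (· - x)) :
    (l * a = a ∧ l * b = b) ∨ b = l * a ∨ a = (1 - l) * b ∨ b = (1 - l) * a := by
  simp only [Finset.mem_insert, Finset.mem_singleton] at hx
  rcases hx with rfl | rfl | rfl
  · obtain ⟨ha, hb, -⟩ := hD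
    have hu : IsUnit l := .of_mul_eq_one l hl
    rw [image_mul_insert_zero_pair, show ({0, a, b} : Finset R).image (· - 0) = {0, a, b} by simp,
      Finset.insert_zero_pair_eq_iff (hu.mul_right_eq_zero.not.2 ha)
      (hu.mul_right_eq_zero.not.2 hb) ha hb] at h
    exact h.imp_right fun h => Or.inl h.1.symm
  · exact Or.inr (Or.inr (Or.inl (eq_one_sub_mul_of_image_mul_eq_image_sub_left hl hD h)))
  · rw [Finset.pair_comm] at h
    exact Or.inr (Or.inr (Or.inr (eq_one_sub_mul_of_image_mul_eq_image_sub_left hl hD.symm h)))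

end CommRing

namespace ZMod

variable {v : ℕ}

theorem mul_mem_closure_singleton (c a : ZMod v) : c * a ∈ AddSubgroup.closure {a} :=
  AddSubgroup.mem_closure_singleton.2 ⟨cast c, by rw [zsmul_eq_mul, intCast_zmod_cast]⟩

theorem closure_pair_mul (a c : ZMod v) :
    AddSubgroup.closure {a, c * a} = AddSubgroup.closure {a} :=
  le_antisymm (AddSubgroup.closure_le _ |>.2 <| Set.insert_subset_iff.2
      ⟨AddSubgroup.subset_closure rfl, Set.singleton_subset_iff.2 (mul_mem_closure_singleton c a)⟩)
    (AddSubgroup.closure_mono (Set.singleton_subset_iff.2 (Set.mem_insert _ _)))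

theorem closure_singleton_eq_top_iff {a : ZMod v} :
    AddSubgroup.closure {a} = ⊤ ↔ IsUnit a := by
  refine ⟨fun h => ?_, fun ⟨u, hu⟩ => eq_top_iff.2 fun x _ => ?_⟩
  · obtain ⟨n, hn⟩ := AddSubgroup.mem_closure_singleton.1 (h ▸ AddSubgroup.mem_top (1 : ZMod v))
    exact .of_mul_eq_one_right (n : ZMod v) (by rwa [zsmul_eq_mul] at hn)
  · rw [← hu, ← Units.inv_mul_cancel_right x u]
    exact mul_mem_closure_singleton _ _

theorem two_mul_one_sub_eq_zero_iff [NeZero v] {l : ZMod v} (hl : l * l = 1) (hl1 : l ≠ 1) :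
    2 * (1 - l) = 0 ↔ v % 4 = 0 ∧ l.val ≡ 1 [MOD v / 2] := by
  set w := l.val
  have hwl : (w : ZMod v) = l := natCast_zmod_val l
  have hw0 : w ≠ 0 := by
    intro h0
    rw [h0, Nat.cast_zero] at hwl
    subst hwl
    exact hl1 (by simpa using hl)
  have hw1 : w ≠ 1 := fun h => hl1 (by rw [← hwl, h, Nat.cast_one])
  have hwv : w < v := val_lt l
  have key : 2 * (1 - l) = 0 ↔ 2 ≡ 2 * w [MOD v] := by
    rw [← natCast_eq_natCast_iff, Nat.cast_mul, hwl, Nat.cast_ofNat, mul_sub, mul_one,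
      sub_eq_zero]
  rw [key]
  constructor
  · intro h
    have hv : 2 * w - 2 = v :=
      Nat.eq_of_dvd_of_lt_two_mul (by omega) ((Nat.modEq_iff_dvd' (by omega)).1 h) (by omega)
    have hsq : 1 ≡ w * w [MOD v] := by
      rw [← natCast_eq_natCast_iff, Nat.cast_mul, hwl, Nat.cast_one, hl]
    -- `v = 2 (w - 1)` divides `w² - 1 = (w + 1)(w - 1)`, so `w` is odd
    have hdvd : 2 * (w - 1) ∣ (w + 1) * (w - 1) := by
      rw [← Nat.mul_self_sub_mul_self_eq, show 2 * (w - 1) = v by omega]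
      exact (Nat.modEq_iff_dvd' (Nat.one_le_iff_ne_zero.2 (mul_ne_zero hw0 hw0))).1 hsq
    have hodd := (Nat.mul_dvd_mul_iff_right (by omega)).1 hdvd
    refine ⟨by omega, ((Nat.modEq_iff_dvd' (by omega)).2 ?_).symm⟩
    rw [show v / 2 = w - 1 by omega]
  · rintro ⟨h4, h⟩
    have h2 := h.symm.mul_left' 2
    rwa [mul_one, show 2 * (v / 2) = v by omega] at h2

end ZMod

section Classification

variable {v : ℕ}

theorem insert_zero_pair_mem_Bcon3_iff {a b : ZMod v} :
    ({0, a, b} : Finset (ZMod v)) ∈ Bcon3 v ↔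
      DiffsDistinct a b ∧ AddSubgroup.closure {a, b} = ⊤ := by
  simp only [Bcon3, Set.mem_ofPred_eq, card_insert_zero_pair_sub_self_eq_seven_iff,
    closure_insert_zero_pair_sub_self]
  refine ⟨fun h => h.2, fun h => ⟨Finset.card_eq_three.2 ⟨0, a, b, h.1.1.symm, h.1.2.1.symm,
    sub_ne_zero.1 h.1.2.2.1, rfl⟩, h⟩⟩

def IsBaseLineWithMultiplier (l : ZMod v) (X : Finset (ZMod v)) : Prop :=
  X ∈ Bcon3 v ∧ (0 : ZMod v) ∈ X ∧ ∃ x ∈ X, X.image (l * ·) = X.image (· - x)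

-- For `l * l = 1`, multiplication by `l` maps `fixedTriple l u` to itself and
-- `shiftedTriple l u` to its translate by `-(1 - l) * u`.
def fixedTriple (l u : ZMod v) : Finset (ZMod v) := {0, u, l * u}

def shiftedTriple (l u : ZMod v) : Finset (ZMod v) := {0, (1 - l) * u, u}

variable {l : ZMod v}

theorem exists_unit_of_isBaseLineWithMultiplier (hl : l * l = 1) (hl1 : l ≠ 1)
    {X : Finset (ZMod v)} (hX : IsBaseLineWithMultiplier l X) :
    ∃ u : (ZMod v)ˣ, X = fixedTriple l u ∨ X = shiftedTriple l u := by
  obtain ⟨hB, h0, x, hx, himg⟩ := hX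
  obtain ⟨a, b, -, -, -, rfl⟩ := Finset.exists_eq_insert_zero_pair hB.1 h0
  obtain ⟨hD, hcl⟩ := insert_zero_pair_mem_Bcon3_iff.1 hB
  rcases eq_mul_or_eq_one_sub_mul_of_image_mul_eq_image_sub hl hD hx himg with
    ⟨hla, hlb⟩ | rfl | rfl | rfl
  · refine absurd (eq_one_of_forall_mul_eq_self_of_closure_eq_top hcl ?_) hl1
    rintro _ (rfl | rfl) <;> assumption
  · rw [ZMod.closure_pair_mul, ZMod.closure_singleton_eq_top_iff] at hcl
    exact ⟨hcl.unit, Or.inl rfl⟩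
  · rw [Set.pair_comm, ZMod.closure_pair_mul, ZMod.closure_singleton_eq_top_iff] at hcl
    exact ⟨hcl.unit, Or.inr rfl⟩
  · rw [ZMod.closure_pair_mul, ZMod.closure_singleton_eq_top_iff] at hcl
    exact ⟨hcl.unit, Or.inr (by rw [shiftedTriple, IsUnit.unit_spec, Finset.pair_comm])⟩

theorem isBaseLineWithMultiplier_fixedTriple_iff (hl : l * l = 1) (u : (ZMod v)ˣ) :
    IsBaseLineWithMultiplier l (fixedTriple l u) ↔ DiffsDistinct 1 l := by
  have hD : DiffsDistinct (u : ZMod v) (l * u) ↔ DiffsDistinct 1 l := by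
    have h := diffsDistinct_unit_mul_iff u (a := 1) (b := l)
    rwa [mul_one, mul_comm] at h
  have himg : (fixedTriple l u).image (l * ·) = (fixedTriple l u).image (· - 0) := by
    rw [fixedTriple, image_mul_insert_zero_pair, ← mul_assoc, hl, one_mul, Finset.pair_comm]
    simp
  simp only [IsBaseLineWithMultiplier, fixedTriple, insert_zero_pair_mem_Bcon3_iff, hD,
    ZMod.closure_pair_mul, ZMod.closure_singleton_eq_top_iff, u.isUnit, and_true]
  exact and_iff_left ⟨by simp, 0, by simp, himg⟩

theorem isBaseLineWithMultiplier_shiftedTriple_iff (hl : l * l = 1) (u : (ZMod v)ˣ) :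
    IsBaseLineWithMultiplier l (shiftedTriple l u) ↔ DiffsDistinct (1 - l) 1 := by
  have hD : DiffsDistinct ((1 - l) * u) (u : ZMod v) ↔ DiffsDistinct (1 - l) 1 := by
    have h := diffsDistinct_unit_mul_iff u (a := 1 - l) (b := 1)
    rwa [mul_one, mul_comm] at h
  have himg : (shiftedTriple l u).image (l * ·) =
      (shiftedTriple l u).image (· - (1 - l) * u) := by
    rw [shiftedTriple, image_mul_insert_zero_pair]
    simp only [Finset.image_insert, Finset.image_singleton, zero_sub, sub_self]
    rw [show l * ((1 - l) * u) = -((1 - l) * u) by linear_combination -(u : ZMod v) * hl,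
      show (u : ZMod v) - (1 - l) * u = l * u by ring, Finset.insert_comm]
  simp only [IsBaseLineWithMultiplier, shiftedTriple, insert_zero_pair_mem_Bcon3_iff, hD,
    Set.pair_comm _ (u : ZMod v), ZMod.closure_pair_mul, ZMod.closure_singleton_eq_top_iff,
    u.isUnit, and_true]
  exact and_iff_left ⟨by simp, (1 - l) * u, by simp, himg⟩

theorem isBaseLineWithMultiplier_iff (h2 : (2 : ZMod v) ≠ 0) (hl : l * l = 1) (hl1 : l ≠ 1)
    {X : Finset (ZMod v)} :
    IsBaseLineWithMultiplier l X ↔ (l + 1 ≠ 0 ∧ 2 * (1 - l) ≠ 0) ∧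
      ∃ u : (ZMod v)ˣ, X = fixedTriple l u ∨ X = shiftedTriple l u := by
  refine ⟨fun hX => ⟨?_, exists_unit_of_isBaseLineWithMultiplier hl hl1 hX⟩, ?_⟩
  · obtain ⟨u, rfl | rfl⟩ := exists_unit_of_isBaseLineWithMultiplier hl hl1 hX
    · rwa [isBaseLineWithMultiplier_fixedTriple_iff hl, diffsDistinct_one_iff h2 hl hl1] at hX
    · rwa [isBaseLineWithMultiplier_shiftedTriple_iff hl,
        diffsDistinct_one_sub_iff h2 hl hl1] at hX
  · rintro ⟨hQ, u, rfl | rfl⟩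
    · rwa [isBaseLineWithMultiplier_fixedTriple_iff hl, diffsDistinct_one_iff h2 hl hl1]
    · rwa [isBaseLineWithMultiplier_shiftedTriple_iff hl, diffsDistinct_one_sub_iff h2 hl hl1]

end Classification

section Counting

variable {v : ℕ} {l : (ZMod v)ˣ}

theorem fixedTriple_eq_fixedTriple_iff [Nontrivial (ZMod v)] (hl : (l : ZMod v) * l = 1)
    {u w : (ZMod v)ˣ} :
    fixedTriple (l : ZMod v) w = fixedTriple (l : ZMod v) u ↔ w = u ∨ w = l * u := by
  constructor
  · intro h
    have hw : (w : ZMod v) ∈ fixedTriple (l : ZMod v) u := h ▸ by simp [fixedTriple]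
    simp only [fixedTriple, Finset.mem_insert, Finset.mem_singleton, w.ne_zero, false_or] at hw
    exact hw.imp Units.ext fun h => Units.ext (by rw [h, Units.val_mul])
  · rintro (rfl | rfl)
    · rfl
    · rw [fixedTriple, fixedTriple, Units.val_mul, ← mul_assoc, hl, one_mul, Finset.pair_comm]

theorem card_units_eq_card_image_fixedTriple_mul_two [NeZero v] [Nontrivial (ZMod v)]
    (hl : (l : ZMod v) * l = 1) (hl1 : (l : ZMod v) ≠ 1) :
    Fintype.card (ZMod v)ˣ =
      (Finset.univ.image fun u : (ZMod v)ˣ => fixedTriple (l : ZMod v) u).card * 2 := by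
  rw [← Finset.card_univ,
    Finset.card_eq_sum_card_image (fun u : (ZMod v)ˣ => fixedTriple (l : ZMod v) u),
    Finset.sum_const_nat]
  intro X hX
  obtain ⟨u, -, rfl⟩ := Finset.mem_image.1 hX
  have hfiber : (Finset.univ.filter fun w : (ZMod v)ˣ =>
      fixedTriple (l : ZMod v) w = fixedTriple (l : ZMod v) u) = {u, l * u} := by
    ext w
    simp [fixedTriple_eq_fixedTriple_iff hl]
  rw [hfiber, Finset.card_pair fun h => hl1 ?_]
  rw [mul_eq_right.1 h.symm, Units.val_one]

theorem card_image_shiftedTriple [NeZero v] [Nontrivial (ZMod v)] (hl : (l : ZMod v) * l = 1)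
    (hl' : (l : ZMod v) + 1 ≠ 0) :
    (Finset.univ.image fun u : (ZMod v)ˣ => shiftedTriple (l : ZMod v) u).card =
      Fintype.card (ZMod v)ˣ := by
  rw [Finset.card_image_of_injective _ fun u w h => ?_, Finset.card_univ]
  have hu : (u : ZMod v) ∈ shiftedTriple (l : ZMod v) w := h ▸ by simp [shiftedTriple]
  simp only [shiftedTriple, Finset.mem_insert, Finset.mem_singleton, u.ne_zero, false_or] at hu
  refine Units.ext (hu.resolve_left fun h => not_isUnit_one_sub hl hl' ?_)
  exact (IsUnit.mul_iff.1 (h ▸ u.isUnit)).1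

theorem disjoint_image_fixedTriple_image_shiftedTriple [NeZero v] (hl : (l : ZMod v) * l = 1)
    (hl1 : (l : ZMod v) ≠ 1) (hl' : (l : ZMod v) + 1 ≠ 0) :
    Disjoint (Finset.univ.image fun u : (ZMod v)ˣ => fixedTriple (l : ZMod v) u)
      (Finset.univ.image fun w : (ZMod v)ˣ => shiftedTriple (l : ZMod v) w) := by
  simp only [Finset.disjoint_left, Finset.mem_image, Finset.mem_univ, true_and, not_exists]
  rintro _ ⟨u, rfl⟩ w h
  have hmem : (1 - (l : ZMod v)) * w ∈ fixedTriple (l : ZMod v) u :=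
    h ▸ by simp [shiftedTriple]
  simp only [fixedTriple, Finset.mem_insert, Finset.mem_singleton, Units.mul_left_eq_zero,
    sub_eq_zero] at hmem
  rcases hmem with h1 | hu | hlu
  · exact hl1 h1.symm
  · exact not_isUnit_one_sub hl hl' (IsUnit.mul_iff.1 (hu ▸ u.isUnit)).1
  · exact not_isUnit_one_sub hl hl'
      (IsUnit.mul_iff.1 (by rw [hlu]; exact l.isUnit.mul u.isUnit)).1

end Counting

/-- if `l ∈ Z_v*` has multiplicative order 2, then `N(v,3,l) = 0`
when `l + 1 ≡ 0 (mod v)`, or when `v ≡ 0 (mod 4)` and `l ≡ 1 (mod v/2)`;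
otherwise `N(v,3,l) = 3φ(v)/2`. -/
theorem Nparam3_of_order_two
    (v : ℕ) (hv : 4 < v) (l : (ZMod v)ˣ) (hord : orderOf l = 2) :
    (((l : ZMod v) + 1 = 0 ∨ (v % 4 = 0 ∧ (l : ZMod v).val ≡ 1 [MOD v / 2])) →
        Nparam3 v l = 0) ∧
    (¬ ((l : ZMod v) + 1 = 0 ∨ (v % 4 = 0 ∧ (l : ZMod v).val ≡ 1 [MOD v / 2])) →
        2 * Nparam3 v l = 3 * Nat.totient v) := by
  have : NeZero v := ⟨by omega⟩
  have : Fact (1 < v) := ⟨by omega⟩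
  have hl : (l : ZMod v) * l = 1 := by
    rw [← Units.val_mul, ← sq, ← hord, pow_orderOf_eq_one, Units.val_one]
  have hl1 : (l : ZMod v) ≠ 1 := fun h => by simp [Units.val_eq_one.1 h] at hord
  have h2 : (2 : ZMod v) ≠ 0 := fun h => by
    simpa [h] using ZMod.val_ofNat_of_lt (n := v) (a := 2) (by omega)
  have hN : Nparam3 v l = Nat.card {X // IsBaseLineWithMultiplier (l : ZMod v) X} := rfl
  rw [← ZMod.two_mul_one_sub_eq_zero_iff hl hl1, hN]
  refine ⟨fun hdeg => Nat.card_eq_zero.2 (Or.inl ⟨fun ⟨X, hX⟩ => ?_⟩), fun hQ => ?_⟩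
  · obtain ⟨hl', hq⟩ := ((isBaseLineWithMultiplier_iff h2 hl hl1).1 hX).1
    exact hdeg.elim hl' hq
  · rw [not_or] at hQ
    have hX : ∀ X, IsBaseLineWithMultiplier (l : ZMod v) X ↔
        X ∈ (Finset.univ.image fun u : (ZMod v)ˣ => fixedTriple (l : ZMod v) u) ∪
          (Finset.univ.image fun u : (ZMod v)ˣ => shiftedTriple (l : ZMod v) u) := by
      simp [isBaseLineWithMultiplier_iff h2 hl hl1, hQ, eq_comm, exists_or]
    have hfixed := card_units_eq_card_image_fixedTriple_mul_two hl hl1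
    have hshifted := card_image_shiftedTriple hl hQ.1
    rw [Nat.card_congr (Equiv.subtypeEquivRight hX), Nat.card_eq_finsetCard,
      Finset.card_union_of_disjoint (disjoint_image_fixedTriple_image_shiftedTriple hl hl1 hQ.1),
      ← ZMod.card_units_eq_totient]
    omega
end

section
/- Let v > 4 and let l ∈ Z_v* have multiplicative order exactly 3. If l² + l + 1 ≢ 0 (mod v) then N(v,3,l) = 0, and if l² + l + 1 ≡ 0 (mod v) then N(v,3,l) = φ(v), where φ is Euler's totient function. -/
open scoped Pointwise

/-!
If `lX = X - x`, the map `y ↦ l y + x` sends `X` into itself; follow the orbit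
`0 ↦ x ↦ (l + 1) x ↦ (l² + l + 1) x` of `0`, using `l³ = 1`. If `x = 0`, then `l` permutes
the two nonzero points of `X`, hence fixes them, so `l - 1` kills `X - X`, which generates:
`l = 1`. If `(l + 1) x = 0`, the third point `b` of `X` is fixed, `l b + x = b`, and `l³ b = b`
forces `x = 0`. Otherwise `X = {0, x, (l + 1) x}` and `(l² + l + 1) x = 0`; as `X - X ⊆ xZ_v`
generates, `x` is a unit and `l² + l + 1 = 0`. Conversely, if `l² + l + 1 = 0` every unit `u`
gives the base line `{0, u, (l + 1) u}`, whose differences `0, ±u, ±l u, ±l² u` are distinct,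
and distinct units give distinct lines.
-/

section

variable {R : Type*} [CommRing R] [DecidableEq R]

theorem AddSubgroup.eq_top_of_forall_sub_mem {G : Type*} [AddGroup G] [DecidableEq G]
    {X : Finset G} (hX : AddSubgroup.closure ((X - X : Finset G) : Set G) = ⊤)
    {H : AddSubgroup G} (hH : ∀ y ∈ X, ∀ z ∈ X, y - z ∈ H) : H = ⊤ := by
  rw [eq_top_iff, ← hX, AddSubgroup.closure_le]
  intro g hg
  obtain ⟨y, hy, z, hz, rfl⟩ := Finset.mem_sub.mp hg
  exact hH y hy z hz

theorem isUnit_of_forall_dvd {X : Finset R}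
    (hX : AddSubgroup.closure ((X - X : Finset R) : Set R) = ⊤) {a : R}
    (ha : ∀ y ∈ X, a ∣ y) : IsUnit a := by
  have htop := AddSubgroup.eq_top_of_forall_sub_mem hX
    (H := (Ideal.span {a}).toAddSubgroup) fun y hy z hz =>
      Ideal.mem_span_singleton.mpr (dvd_sub (ha y hy) (ha z hz))
  have h1 : (1 : R) ∈ (Ideal.span {a}).toAddSubgroup := htop ▸ AddSubgroup.mem_top 1
  exact isUnit_of_dvd_one (Ideal.mem_span_singleton.mp h1)

theorem Finset.exists_eq_insert_insert_singleton {α : Type*} [DecidableEq α] {X : Finset α}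
    (hX : X.card = 3) {a b : α} (ha : a ∈ X) (hb : b ∈ X) (hab : a ≠ b) :
    ∃ c, c ≠ a ∧ c ≠ b ∧ X = {a, b, c} := by
  have hb' : b ∈ X.erase a := Finset.mem_erase.mpr ⟨hab.symm, hb⟩
  have hcard : ((X.erase a).erase b).card = 1 := by
    rw [Finset.card_erase_of_mem hb', Finset.card_erase_of_mem ha, hX]
  obtain ⟨c, hc⟩ := Finset.card_eq_one.mp hcard
  have hcX : c ∈ (X.erase a).erase b := hc ▸ Finset.mem_singleton_self c
  refine ⟨c, Finset.ne_of_mem_erase (Finset.mem_of_mem_erase hcX),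
    Finset.ne_of_mem_erase hcX, ?_⟩
  rw [← hc, Finset.insert_erase hb', Finset.insert_erase ha]

theorem eq_one_of_forall_mul_mem {X : Finset R} (hX : X.card = 3)
    (hcl : AddSubgroup.closure ((X - X : Finset R) : Set R) = ⊤) (h0 : (0 : R) ∈ X)
    {l : R} (hl3 : l ^ 3 = 1) (hmul : ∀ y ∈ X, l * y ∈ X) : l = 1 := by
  have hl : IsUnit l := IsUnit.of_pow_eq_one hl3 three_ne_zero
  obtain ⟨c, d, hcd, hX'⟩ := Finset.card_eq_two.mp (by rw [Finset.card_erase_of_mem h0, hX] :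
    (X.erase 0).card = 2)
  have hmul' : ∀ y ∈ X.erase 0, l * y = c ∨ l * y = d := fun y hy => by
    have : l * y ∈ X.erase 0 := Finset.mem_erase.mpr ⟨mt hl.mul_right_eq_zero.mp
      (Finset.ne_of_mem_erase hy), hmul y (Finset.mem_of_mem_erase hy)⟩
    simpa [hX'] using this
  have hc := hmul' c (by simp [hX'])
  have hd := hmul' d (by simp [hX'])
  have hfix_cd : l * c = c ∧ l * d = d := by
    rcases hc with hc | hc <;> rcases hd with hd | hd
    · exact absurd (hl.mul_left_cancel (hc.trans hd.symm)) hcd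
    · exact ⟨hc, hd⟩
    · exact absurd (by linear_combination (l ^ 2 + 1) * hc + l * hd - c * hl3) hcd
    · exact absurd (hl.mul_left_cancel (hc.trans hd.symm)) hcd
  have hfix : ∀ y ∈ X, (l - 1) * y = 0 := by
    intro y hy
    rcases eq_or_ne y 0 with rfl | hy0
    · exact mul_zero _
    have hy' : y = c ∨ y = d := by simpa [hX'] using Finset.mem_erase.mpr ⟨hy0, hy⟩
    rcases hy' with rfl | rfl
    · linear_combination hfix_cd.1
    · linear_combination hfix_cd.2
  have htop := AddSubgroup.eq_top_of_forall_sub_mem hcl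
    (H := (AddMonoidHom.mulLeft (l - 1)).ker) fun y hy z hz => by
      simp [mul_sub, hfix y hy, hfix z hz]
  have h1 : (1 : R) ∈ (AddMonoidHom.mulLeft (l - 1)).ker := htop ▸ AddSubgroup.mem_top 1
  simpa [sub_eq_zero] using h1

theorem eq_triple_of_image_mul_eq_image_sub {X : Finset R} (hX : X.card = 3)
    (hcl : AddSubgroup.closure ((X - X : Finset R) : Set R) = ⊤) (h0 : (0 : R) ∈ X)
    {l x : R} (hl3 : l ^ 3 = 1) (hl1 : l ≠ 1) (hx : x ∈ X)
    (himg : X.image (fun y => l * y) = X.image (fun y => y - x)) :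
    l ^ 2 + l + 1 = 0 ∧ ∃ u : Rˣ, X = {0, (u : R), (l + 1) * u} := by
  have hl : IsUnit l := IsUnit.of_pow_eq_one hl3 three_ne_zero
  have hstep : ∀ y ∈ X, l * y + x ∈ X := fun y hy => by
    obtain ⟨z, hz, hzy⟩ := Finset.mem_image.mp (himg ▸ Finset.mem_image_of_mem (l * ·) hy)
    rwa [← sub_eq_iff_eq_add.mp hzy]
  have hx0 : x ≠ 0 := by
    rintro rfl
    exact hl1 (eq_one_of_forall_mul_mem hX hcl h0 hl3 fun y hy => by simpa using hstep y hy)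
  obtain ⟨b, hb0, hbx, rfl⟩ := Finset.exists_eq_insert_insert_singleton hX h0 hx hx0.symm
  have hbX := hstep b (by simp)
  have hxX : (l + 1) * x ∈ ({0, x, b} : Finset R) := by
    simpa only [add_mul, one_mul] using hstep x (by simp)
  simp only [Finset.mem_insert, Finset.mem_singleton] at hbX hxX
  have hb : b = (l + 1) * x := by
    rcases hxX with h | h | h
    · exfalso
      rcases hbX with h' | h' | h'
      · exact hbx (hl.mul_left_cancel (by linear_combination h' - h))
      · exact hb0 (hl.mul_right_eq_zero.mp (by linear_combination h'))
      · exact hx0 (by linear_combination (-b) * hl3 - l * h + (l ^ 2 + l + 1) * h')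
    · exact absurd (hl.mul_right_eq_zero.mp (by linear_combination h)) hx0
    · exact h.symm
  subst hb
  have horbit := hstep ((l + 1) * x) (by simp)
  simp only [Finset.mem_insert, Finset.mem_singleton] at horbit
  have hs : (l ^ 2 + l + 1) * x = 0 := by
    rcases horbit with h | h | h
    · linear_combination h
    · exact absurd (hl.mul_right_eq_zero.mp (by linear_combination h)) hb0
    · exact absurd ((hl.pow 2).mul_right_eq_zero.mp (by linear_combination h)) hx0
  have hxu : IsUnit x := isUnit_of_forall_dvd hcl fun y hy => by
    simp only [Finset.mem_insert, Finset.mem_singleton] at hy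
    rcases hy with rfl | rfl | rfl
    exacts [dvd_zero x, dvd_rfl, dvd_mul_left x _]
  exact ⟨hxu.mul_left_eq_zero.mp hs, hxu.unit, rfl⟩

theorem Finset.triple_sub_self (a b : R) :
    ({0, a, b} : Finset R) - {0, a, b} = {0, a, -a, b, -b, a - b, b - a} := by
  ext z
  simp only [Finset.mem_sub, Finset.mem_insert, Finset.mem_singleton, exists_eq_or_imp,
    exists_eq_left, sub_zero, zero_sub, sub_self]
  tauto

theorem card_triple {l : R} (hl1 : l ≠ 1) (hs : l ^ 2 + l + 1 = 0) (u : Rˣ) :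
    ({0, (u : R), (l + 1) * u} : Finset R).card = 3 := by
  have hu := u.mul_inv
  rw [Finset.card_eq_three]
  exact ⟨_, _, _, by grind, by grind, by grind, rfl⟩

theorem card_triple_sub_self {l : R} (h2 : (2 : R) ≠ 0) (hl1 : l ≠ 1) (hs : l ^ 2 + l + 1 = 0)
    (u : Rˣ) : (({0, (u : R), (l + 1) * u} : Finset R) - {0, (u : R), (l + 1) * u}).card = 7 := by
  have hu := u.mul_inv
  have hnodup : [0, (u : R), -u, (l + 1) * u, -((l + 1) * u), u - (l + 1) * u,
      (l + 1) * u - u].Nodup := by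
    simp only [List.nodup_cons, List.mem_cons, List.not_mem_nil, or_false, not_or,
      List.nodup_nil, and_true]
    and_intros <;> grind
  rw [Finset.triple_sub_self]
  simpa using List.toFinset_card_of_nodup hnodup

theorem image_mul_triple {l : R} (hs : l ^ 2 + l + 1 = 0) (u : R) :
    ({0, u, (l + 1) * u} : Finset R).image (l * ·) =
      ({0, u, (l + 1) * u} : Finset R).image (· - u) := by
  simp only [Finset.image_insert, Finset.image_singleton, mul_zero, zero_sub, sub_self]
  rw [show l * ((l + 1) * u) = -u by linear_combination u * hs,
    show (l + 1) * u - u = l * u by ring]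
  ext
  simp only [Finset.mem_insert, Finset.mem_singleton]
  tauto

theorem triple_injective {l : R} (hl1 : l ≠ 1) (hs : l ^ 2 + l + 1 = 0) :
    Function.Injective fun u : Rˣ => ({0, (u : R), (l + 1) * u} : Finset R) := by
  intro u w h
  simp only at h
  have hu : (u : R) ∈ ({0, (w : R), (l + 1) * w} : Finset R) := h ▸ by simp
  have hw : (w : R) ∈ ({0, (u : R), (l + 1) * u} : Finset R) := h ▸ by simp
  simp only [Finset.mem_insert, Finset.mem_singleton] at hu hw
  have := u.mul_inv
  have := w.mul_inv
  ext
  grind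

end

theorem ZMod.closure_eq_top_of_isUnit_mem {v : ℕ} {S : Set (ZMod v)} {u : ZMod v} (hu : IsUnit u)
    (huS : u ∈ S) : AddSubgroup.closure S = ⊤ := by
  refine eq_top_iff.mpr fun z _ => ?_
  obtain ⟨k, hk⟩ := ZMod.intCast_surjective (z * ((hu.unit⁻¹ : (ZMod v)ˣ) : ZMod v))
  have : z = k • u := by rw [zsmul_eq_mul, hk, mul_assoc, IsUnit.val_inv_mul, mul_one]
  exact this ▸ zsmul_mem (AddSubgroup.subset_closure huS) k

theorem two_lt_of_orderOf_eq_three {v : ℕ} {l : (ZMod v)ˣ} (h : orderOf l = 3) : 2 < v := by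
  rcases v with _ | _ | _ | v
  -- `ZMod 0` is `ℤ`, whose units square to `1`
  · have := orderOf_dvd_of_pow_eq_one (show l ^ 2 = 1 from Int.units_sq l)
    rw [h] at this
    norm_num at this
  iterate 2
    · have := orderOf_dvd_card (x := l)
      rw [h] at this
      simp at this
  omega

theorem bcon3_image_mul_eq_image_sub_iff {v : ℕ} {l : ZMod v} (h2 : (2 : ZMod v) ≠ 0)
    (hl3 : l ^ 3 = 1) (hl1 : l ≠ 1) (X : Finset (ZMod v)) :
    (X ∈ Bcon3 v ∧ (0 : ZMod v) ∈ X ∧ ∃ x ∈ X, X.image (l * ·) = X.image (· - x)) ↔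
      l ^ 2 + l + 1 = 0 ∧ X ∈ Set.range fun u : (ZMod v)ˣ => {0, (u : ZMod v), (l + 1) * u} := by
  constructor
  · rintro ⟨⟨hX, -, hcl⟩, h0, x, hx, himg⟩
    obtain ⟨hs, u, rfl⟩ := eq_triple_of_image_mul_eq_image_sub hX hcl h0 hl3 hl1 hx himg
    exact ⟨hs, u, rfl⟩
  · rintro ⟨hs, u, rfl⟩
    refine ⟨⟨card_triple hl1 hs u, card_triple_sub_self h2 hl1 hs u, ?_⟩, by simp, u, by simp,
      image_mul_triple hs u⟩
    exact ZMod.closure_eq_top_of_isUnit_mem u.isUnit (Finset.mem_coe.mpr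
      (by simpa using Finset.sub_mem_sub (a := (u : ZMod v)) (b := 0) (by simp) (by simp)))

theorem Nparam3_of_order_three_general
    (v : ℕ) (l : (ZMod v)ˣ) (hord : orderOf l = 3) :
    ((l : ZMod v) ^ 2 + (l : ZMod v) + 1 ≠ 0 → Nparam3 v l = 0) ∧
    ((l : ZMod v) ^ 2 + (l : ZMod v) + 1 = 0 → Nparam3 v l = Nat.totient v) := by
  have hv := two_lt_of_orderOf_eq_three hord
  have : NeZero v := ⟨by omega⟩
  have h2 : (2 : ZMod v) ≠ 0 := by
    simpa using (ZMod.natCast_eq_zero_iff 2 v).not.mpr (Nat.not_dvd_of_pos_of_lt two_pos hv)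
  have hl3 : (l : ZMod v) ^ 3 = 1 := by
    rw [← Units.val_pow_eq_pow_val, ← hord, pow_orderOf_eq_one, Units.val_one]
  have hl1 : (l : ZMod v) ≠ 1 := fun h => by
    rw [Units.val_eq_one.mp h, orderOf_one] at hord
    omega
  have key := bcon3_image_mul_eq_image_sub_iff h2 hl3 hl1
  refine ⟨fun hs => ?_, fun hs => ?_⟩
  · exact Nat.card_eq_zero.mpr (Or.inl ⟨fun X => hs ((key X.1).mp X.2).1⟩)
  · rw [Nparam3,
      Nat.card_congr (Equiv.subtypeEquivRight fun X => (key X).trans (and_iff_right hs)),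
      Nat.card_range_of_injective (triple_injective hl1 hs), Nat.card_eq_fintype_card,
      ZMod.card_units_eq_totient]

/-- if `l ∈ Z_v*` has multiplicative order 3, then `N(v,3,l) = 0`
when `l² + l + 1 ≢ 0 (mod v)`, and `N(v,3,l) = φ(v)` when `l² + l + 1 ≡ 0 (mod v)`. -/
theorem Nparam3_of_order_three
    (v : ℕ) (hv : 4 < v) (l : (ZMod v)ˣ) (hord : orderOf l = 3) :
    ((l : ZMod v) ^ 2 + (l : ZMod v) + 1 ≠ 0 → Nparam3 v l = 0) ∧
    ((l : ZMod v) ^ 2 + (l : ZMod v) + 1 = 0 → Nparam3 v l = Nat.totient v) :=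
  Nparam3_of_order_three_general v l hord
end

section
/- For every positive integer v, the number of ordered pairs (x, y) ∈ Z_v × Z_v such that x and y together generate the additive group Z_v equals φ(v)·Φ(v), where φ is Euler's totient function and Φ(v) = v·∏_{p | v, p prime} (1 + 1/p) (with Φ(1) = 1). -/
/-!
A pair `(x, y)` generates `ZMod v` additively iff `a * x + b * y = 1` for some `a, b`, i.e. iff
`x` and `y` are coprime elements of the ring `ZMod v`. By the Chinese remainder theorem the
number of coprime pairs is multiplicative in `v`. The ring `ZMod (p ^ n)` is local, so there a
pair is coprime unless both entries lie among the `p ^ (n - 1)` non-units. Hence the count is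
Jordan's totient `v² ∏_{p ∣ v} (1 - 1/p²)`, which factors as `φ(v) · Φ(v)`.
-/

theorem ZMod.closure_pair_eq_top_iff_isCoprime {n : ℕ} (x y : ZMod n) :
    AddSubgroup.closure ({x, y} : Set (ZMod n)) = ⊤ ↔ IsCoprime x y := by
  have one_mem_iff : (1 : ZMod n) ∈ AddSubgroup.closure {x, y} ↔ IsCoprime x y := by
    simp only [AddSubgroup.mem_closure_pair, zsmul_eq_mul]
    constructor
    · rintro ⟨a, b, h⟩
      exact ⟨a, b, h⟩
    · rintro ⟨a, b, h⟩
      exact ⟨a.cast, b.cast, by simpa only [ZMod.intCast_cast, ZMod.cast_id', id] using h⟩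
  rw [← one_mem_iff, AddSubgroup.eq_top_iff']
  refine ⟨fun h => h 1, fun h z => ?_⟩
  simpa only [zsmul_eq_mul, mul_one, ZMod.intCast_cast, ZMod.cast_id', id] using
    AddSubgroup.zsmul_mem _ h (z.cast : ℤ)

theorem Nat.card_subtype_add_card_subtype_not {α : Type*} [Finite α] (p : α → Prop) :
    Nat.card {x // p x} + Nat.card {x // ¬p x} = Nat.card α := by
  classical
  rw [← Nat.card_sum, Nat.card_congr (Equiv.sumCompl p)]

theorem Nat.card_units_add_card_nonunits (M : Type*) [Monoid M] [Finite M] :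
    Nat.card Mˣ + Nat.card {x : M // ¬IsUnit x} = Nat.card M := by
  rw [Nat.card_congr Submonoid.unitsTypeEquivIsUnitSubmonoid.toEquiv]
  exact Nat.card_subtype_add_card_subtype_not IsUnit

theorem Prod.isCoprime_iff {A B : Type*} [CommSemiring A] [CommSemiring B] {x y : A × B} :
    IsCoprime x y ↔ IsCoprime x.1 y.1 ∧ IsCoprime x.2 y.2 where
  mp := fun ⟨a, b, h⟩ => ⟨⟨a.1, b.1, congrArg Prod.fst h⟩, ⟨a.2, b.2, congrArg Prod.snd h⟩⟩
  mpr := fun ⟨⟨a₁, b₁, h₁⟩, ⟨a₂, b₂, h₂⟩⟩ => ⟨(a₁, a₂), (b₁, b₂), Prod.ext h₁ h₂⟩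

theorem RingEquiv.isCoprime_iff {A B : Type*} [CommSemiring A] [CommSemiring B] (e : A ≃+* B)
    {x y : A} : IsCoprime (e x) (e y) ↔ IsCoprime x y where
  mp h := by simpa using h.map e.symm.toRingHom
  mpr h := h.map e.toRingHom

theorem IsLocalRing.isCoprime_iff {R : Type*} [CommRing R] [IsLocalRing R] {x y : R} :
    IsCoprime x y ↔ IsUnit x ∨ IsUnit y where
  mp := fun ⟨_, _, h⟩ =>
    (isUnit_or_isUnit_of_add_one h).imp isUnit_of_mul_isUnit_right isUnit_of_mul_isUnit_right
  mpr := by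
    rintro (hx | hy)
    · exact ⟨↑hx.unit⁻¹, 0, by simp⟩
    · exact ⟨0, ↑hy.unit⁻¹, by simp⟩

abbrev CoprimePairs (R : Type*) [CommSemiring R] := {q : R × R // IsCoprime q.1 q.2}

def RingEquiv.coprimePairsCongr {A B : Type*} [CommSemiring A] [CommSemiring B] (e : A ≃+* B) :
    CoprimePairs A ≃ CoprimePairs B :=
  (e.toEquiv.prodCongr e.toEquiv).subtypeEquiv fun _ => e.isCoprime_iff.symm

def CoprimePairs.prodEquiv (A B : Type*) [CommSemiring A] [CommSemiring B] :
    CoprimePairs (A × B) ≃ CoprimePairs A × CoprimePairs B :=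
  ((Equiv.prodProdProdComm A B A B).subtypeEquiv fun _ => Prod.isCoprime_iff).trans
    Equiv.subtypeProdEquivProd

theorem IsLocalRing.card_coprimePairs_add_card_nonunits_sq {R : Type*} [CommRing R]
    [IsLocalRing R] [Finite R] :
    Nat.card (CoprimePairs R) + Nat.card {x : R // ¬IsUnit x} ^ 2 = Nat.card R ^ 2 := by
  have noncoprime :
      {q : R × R // ¬IsCoprime q.1 q.2} ≃ {x : R // ¬IsUnit x} × {x : R // ¬IsUnit x} :=
    (Equiv.subtypeEquivRight fun q => by rw [isCoprime_iff, not_or]).trans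
      Equiv.subtypeProdEquivProd
  rw [sq, ← Nat.card_prod, ← Nat.card_congr noncoprime, sq, ← Nat.card_prod]
  exact Nat.card_subtype_add_card_subtype_not _

-- `ZMod (p ^ n)` is a quotient of the local ring `ℤ_[p]`.
instance ZMod.isLocalRing_prime_pow (p n : ℕ) [Fact p.Prime] [NeZero n] :
    IsLocalRing (ZMod (p ^ n)) := by
  have : Fact (1 < p ^ n) := ⟨Nat.one_lt_pow (NeZero.ne n) (Fact.out : p.Prime).one_lt⟩
  exact .of_surjective' (PadicInt.toZModPow n) (ZMod.ringHom_surjective _)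

theorem ZMod.card_coprimePairs_prime_pow {p n : ℕ} (hp : p.Prime) (hn : n ≠ 0) :
    (Nat.card (CoprimePairs (ZMod (p ^ n))) : ℚ) = (p ^ n : ℚ) ^ 2 * (1 - 1 / (p : ℚ) ^ 2) := by
  have : Fact p.Prime := ⟨hp⟩
  have : NeZero n := ⟨hn⟩
  have count := IsLocalRing.card_coprimePairs_add_card_nonunits_sq (R := ZMod (p ^ n))
  have units := Nat.card_units_add_card_nonunits (ZMod (p ^ n))
  have totient := Nat.totient_eq_mul_prod_factors (p ^ n)
  rw [Nat.card_zmod] at count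
  rw [Nat.card_eq_fintype_card (α := (ZMod (p ^ n))ˣ), ZMod.card_units_eq_totient,
    Nat.card_zmod] at units
  rw [Nat.primeFactors_prime_pow hn hp, Finset.prod_singleton] at totient
  set k := Nat.card {x : ZMod (p ^ n) // ¬IsUnit x}
  qify at count units
  push_cast at totient
  linear_combination count - (k + (p : ℚ) ^ n / p) * (units - totient)

theorem ZMod.card_coprimePairs_mul {a b : ℕ} (hab : a.Coprime b) :
    Nat.card (CoprimePairs (ZMod (a * b))) =
      Nat.card (CoprimePairs (ZMod a)) * Nat.card (CoprimePairs (ZMod b)) := by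
  rw [← Nat.card_prod, Nat.card_congr ((ZMod.chineseRemainder hab).coprimePairsCongr.trans
    (CoprimePairs.prodEquiv _ _))]

theorem ZMod.card_coprimePairs {v : ℕ} (hv : v ≠ 0) :
    (Nat.card (CoprimePairs (ZMod v)) : ℚ) =
      (v : ℚ) ^ 2 * ∏ p ∈ v.primeFactors, (1 - 1 / (p : ℚ) ^ 2) := by
  induction v using Nat.recOnPosPrimePosCoprime with
  | prime_pow p n hp hn =>
    rw [Nat.primeFactors_prime_pow hn.ne' hp, Finset.prod_singleton,
      card_coprimePairs_prime_pow hp hn.ne', Nat.cast_pow]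
  | zero => exact absurd rfl hv
  | one =>
    rw [Nat.card_eq_one_iff_unique.mpr ⟨inferInstance, ⟨⟨(1, 1), isCoprime_one_left⟩⟩⟩]
    simp
  | coprime a b ha hb hab iha ihb =>
    rw [card_coprimePairs_mul hab, hab.primeFactors_mul,
      Finset.prod_union hab.disjoint_primeFactors, Nat.cast_mul, Nat.cast_mul,
      iha (by omega), ihb (by omega)]
    ring

theorem ZMod.card_closure_pair_eq_top (n : ℕ) :
    Nat.card {p : ZMod n × ZMod n // AddSubgroup.closure ({p.1, p.2} : Set (ZMod n)) = ⊤} =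
      Nat.card (CoprimePairs (ZMod n)) :=
  Nat.card_congr (Equiv.subtypeEquivRight fun q => closure_pair_eq_top_iff_isCoprime q.1 q.2)

/-- for every positive integer `v`, the number of ordered pairs
`(x, y) ∈ Z_v × Z_v` generating the additive group `Z_v` equals `φ(v)·Φ(v)`,
where `Φ(v) = v·∏_{p ∣ v} (1 + 1/p)`. -/
theorem card_generating_pairs
    (v : ℕ) (hv : 0 < v) :
    (Nat.card {p : ZMod v × ZMod v //
        AddSubgroup.closure ({p.1, p.2} : Set (ZMod v)) = ⊤} : ℚ) =
      (Nat.totient v : ℚ) * ((v : ℚ) * ∏ p ∈ v.primeFactors, (1 + 1 / (p : ℚ))) := by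
  rw [ZMod.card_closure_pair_eq_top, ZMod.card_coprimePairs hv.ne',
    Nat.totient_eq_mul_prod_factors, mul_mul_mul_comm, ← Finset.prod_mul_distrib, sq]
  exact congrArg _ (Finset.prod_congr rfl fun p _ => by ring)
end
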